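/- arXiv:0909.1273 — 5 statements merged into one kernel-verified Lean document; each statement's English description precedes it below -/
import Mathlib

section
/- Let λ = (3−√5)/2 = τ², where τ = (√5−1)/2. Then for every x ∈ (0,1), the Tichy–Uitz function g_λ is the limit distribution function of the sequences Ξ_n, i.e. g_{τ²}(x) = lim_{n→∞} #{ξ ∈ Ξ_n : ξ ≤ x} / #Ξ_n. -/
open Set Filter

/-- The mediant of two rationals (written in lowest terms). -/
def mediant (x y : ℚ) : ℚ :=
  ((x.num + y.num : ℤ) : ℚ) / ((x.den + y.den : ℕ) : ℚ)

/-- `x` and `y` are consecutive elements of the set `S`. -/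
def IsConsecutive (S : Set ℚ) (x y : ℚ) : Prop :=
  x ∈ S ∧ y ∈ S ∧ x < y ∧ ∀ z ∈ S, ¬ (x < z ∧ z < y)

/-- The Stern–Brocot sequences `ℱ_n`. -/
def sternBrocot : ℕ → Set ℚ
  | 0 => {0, 1}
  | n + 1 => sternBrocot n ∪
      {z | ∃ x y : ℚ, IsConsecutive (sternBrocot n) x y ∧ z = mediant x y}

/-- `Q_n`, the set of mediants newly inserted at step `n ≥ 1` of the
Stern–Brocot construction. -/
def newMediants (n : ℕ) : Set ℚ :=
  {z | ∃ x y : ℚ, IsConsecutive (sternBrocot (n - 1)) x y ∧ z = mediant x y}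

/-- Value of the regular continued fraction `[0; a_1, …, a_m]`. -/
def cfVal : List ℕ → ℚ
  | [] => 0
  | a :: t => 1 / ((a : ℚ) + cfVal t)

/-- `a` is the regular continued fraction expansion `[0; a_1, …, a_m]` of `x`,
with all partial quotients positive and the last one at least `2`. -/
def IsCF (x : ℚ) (a : List ℕ) : Prop :=
  (∀ ai ∈ a, 1 ≤ ai) ∧ 2 ≤ a.getLastD 0 ∧ x = cfVal a

/-- Value of `b_1 - 1/(b_2 - ⋯ - 1/b_l)` (using the convention `1/0 = 0`,
so that `rrTail [b] = b`). -/
def rrTail : List ℕ → ℚ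
  | [] => 0
  | b :: t => (b : ℚ) - 1 / rrTail t

/-- Value of the regular reduced continued fraction
`[[1; b_1, …, b_l]] = 1 - 1/(b_1 - 1/(b_2 - ⋯ - 1/b_l))`. -/
def rrcfVal (b : List ℕ) : ℚ := 1 - 1 / rrTail b

/-- `b` is the regular reduced continued fraction expansion
`[[1; b_1, …, b_l]]` of `x`, with all entries at least `2`. -/
def IsRRCF (x : ℚ) (b : List ℕ) : Prop :=
  (∀ bi ∈ b, 2 ≤ bi) ∧ x = rrcfVal b

/-- `Θ_k`: rationals in `(0,1)` whose regular reduced continued fraction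
expansion satisfies `L(x) = b_1 + ⋯ + b_l = k + 1`. -/
def Theta (k : ℕ) : Set ℚ :=
  {x | x ∈ Set.Ioo (0 : ℚ) 1 ∧ ∃ b : List ℕ, IsRRCF x b ∧ b.sum = k + 1}

/-- `Ξ_n = {0, 1} ∪ Θ_1 ∪ ⋯ ∪ Θ_n`. -/
def Xi (n : ℕ) : Set ℚ :=
  {0, 1} ∪ ⋃ k ∈ Finset.Icc 1 n, Theta k

/-!
Descending the Stern–Brocot tree along a path `p` of left/right steps gives a Farey interval
`(a/b, c/d)`, `cb - ad = 1`, whose mediant has a regular reduced continued fraction with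
`L = weight p + 2`, where a right step has weight `1` and a left step weight `2`. So `Ξ_n` is
`{0, 1}` together with the mediants of the `F_{n+2} - 1` paths of weight `< n`, and the interval of
a node of weight `w` contains `F_{n+2-w}` points of `Ξ_n` (right end included): asymptotically a
proportion `φ⁻¹ ^ w`. The recursion with `λ = φ⁻² = 1 - φ⁻¹` splits the `g`-mass of an interval
as `φ⁻² : φ⁻¹` between its left and right halves, exactly as the weights `+2` and `+1` of the two
steps do, so `g` gives the interval of weight `w` mass `φ⁻¹ ^ w` too. Hence the distribution
functions of `Ξ_n` converge to `g` at the endpoints of the tree, and by monotonicity, continuity of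
`g` and the shrinking of the intervals, everywhere.
-/

open scoped goldenRatio Topology

namespace TichyUitz

/-- A node of the Stern–Brocot tree: the Farey interval `(a/b, c/d)` whose mediant is the node,
and the regular reduced continued fraction expansion of that mediant, in reverse order. -/
structure Node where
  a : ℕ
  b : ℕ
  c : ℕ
  d : ℕ
  rev : List ℕ

namespace Node

/-- `true` is the right child, `false` the left one. -/
def child (s : Node) : Bool → Node
  | true => ⟨s.a + s.c, s.b + s.d, s.c, s.d, (s.rev.headD 0 + 1) :: s.rev.tail⟩
  | false => ⟨s.a, s.b, s.a + s.c, s.b + s.d, 2 :: s.rev⟩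

def root : Node := ⟨0, 1, 1, 1, [2]⟩

def descend (s : Node) (p : List Bool) : Node := p.foldl child s

def lo (s : Node) : ℚ := s.a / s.b

def hi (s : Node) : ℚ := s.c / s.d

def mid (s : Node) : ℚ := ((s.a + s.c : ℕ) : ℚ) / ((s.b + s.d : ℕ) : ℚ)

@[simp] lemma descend_nil (s : Node) : s.descend [] = s := rfl

@[simp] lemma descend_cons (s : Node) (t : Bool) (p : List Bool) :
    s.descend (t :: p) = (s.child t).descend p := rfl

lemma descend_append (s : Node) (p q : List Bool) :
    s.descend (p ++ q) = (s.descend p).descend q := List.foldl_append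

@[simp] lemma lo_child_true (s : Node) : (s.child true).lo = s.mid := rfl
@[simp] lemma hi_child_true (s : Node) : (s.child true).hi = s.hi := rfl
@[simp] lemma lo_child_false (s : Node) : (s.child false).lo = s.lo := rfl
@[simp] lemma hi_child_false (s : Node) : (s.child false).hi = s.mid := rfl

lemma lo_nonneg (s : Node) : 0 ≤ s.lo := by unfold lo; positivity

lemma mid_not_mem_Ioo_child (s : Node) (t : Bool) :
    s.mid ∉ Ioo (s.child t).lo (s.child t).hi := by
  cases t <;> simp

end Node

open Node

def node (p : List Bool) : Node := root.descend p

lemma node_append (p q : List Bool) : node (p ++ q) = (node p).descend q :=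
  descend_append _ _ _

@[simp] lemma node_concat (p : List Bool) (t : Bool) : node (p ++ [t]) = (node p).child t := by
  simp [node_append]

@[simp] lemma lo_node_nil : (node []).lo = 0 := by simp [node, root, lo]

@[simp] lemma hi_node_nil : (node []).hi = 1 := by simp [node, root, hi]

/-- `rrcfWith l y` is `rrcfVal l` with the innermost value `rrcfVal [] = 1` replaced by `y`. -/
def rrcfWith (l : List ℕ) (y : ℚ) : ℚ :=
  l.foldr (fun (b : ℕ) (z : ℚ) => 1 - 1 / ((b : ℚ) - 1 + z)) y

lemma rrcfWith_concat (l : List ℕ) (b : ℕ) (y : ℚ) :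
    rrcfWith (l ++ [b]) y = rrcfWith l (1 - 1 / ((b : ℚ) - 1 + y)) := by
  simp [rrcfWith, List.foldr_append]

lemma rrcfVal_eq_rrcfWith (l : List ℕ) : rrcfVal l = rrcfWith l 1 := by
  induction l with
  | nil => simp [rrcfVal, rrTail, rrcfWith]
  | cons b t ih =>
    simp only [rrcfWith, List.foldr_cons] at ih ⊢
    rw [← ih, rrcfVal, rrTail, rrcfVal]
    ring_nf

structure Valid (s : Node) : Prop where
  det : s.c * s.b = s.a * s.d + 1
  b_pos : 0 < s.b
  d_pos : 0 < s.d
  c_le_d : s.c ≤ s.d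
  rev_ne_nil : s.rev ≠ []
  two_le_of_mem_rev : ∀ x ∈ s.rev, 2 ≤ x
  rrcfWith_rev : ∀ y : ℚ, 0 ≤ y →
    rrcfWith s.rev.reverse y = (s.a + s.c * y) / (s.b + s.d * y)

lemma valid_root : Valid root where
  det := rfl
  b_pos := Nat.one_pos
  d_pos := Nat.one_pos
  c_le_d := le_rfl
  rev_ne_nil := List.cons_ne_nil _ _
  two_le_of_mem_rev := by simp [root]
  rrcfWith_rev y hy := by
    have : (1 : ℚ) + y ≠ 0 := by positivity
    simp only [root, List.reverse_singleton, rrcfWith, List.foldr_cons, List.foldr_nil]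
    field_simp
    ring

lemma Valid.child_false {s : Node} (h : Valid s) : Valid (s.child false) where
  det := by simp only [child]; linear_combination h.det
  b_pos := h.b_pos
  d_pos := by simp only [child]; have := h.b_pos; omega
  c_le_d := by simp only [child]; have := h.c_le_d; have := h.det; nlinarith
  rev_ne_nil := List.cons_ne_nil _ _
  two_le_of_mem_rev := by
    simp only [child, List.mem_cons, forall_eq_or_imp, le_refl, true_and]
    exact h.two_le_of_mem_rev
  rrcfWith_rev y hy := by
    have hy1 : (0 : ℚ) < 1 + y := by positivity
    have hb : (0 : ℚ) < s.b := by exact_mod_cast h.b_pos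
    have hinner : 1 - 1 / (((2 : ℕ) : ℚ) - 1 + y) = y / (1 + y) := by
      field_simp; push_cast; ring
    simp only [child, List.reverse_cons]
    rw [rrcfWith_concat, hinner, h.rrcfWith_rev _ (by positivity)]
    have : (0 : ℚ) < s.b + s.d * (y / (1 + y)) := by positivity
    have : (0 : ℚ) < s.b + (s.b + s.d) * y := by positivity
    field_simp
    push_cast
    ring

lemma Valid.child_true {s : Node} (h : Valid s) : Valid (s.child true) := by
  obtain ⟨b₀, t, hrev⟩ := List.exists_cons_of_ne_nil h.rev_ne_nil
  have hb₀ : 2 ≤ b₀ := h.two_le_of_mem_rev b₀ (by simp [hrev])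
  refine ⟨?_, ?_, h.d_pos, h.c_le_d, ?_, ?_, ?_⟩
  · simp only [child]; linear_combination h.det
  · simp only [child]; have := h.b_pos; omega
  · simp [child]
  · simp only [child, hrev, List.headD_cons, List.tail_cons, List.mem_cons, forall_eq_or_imp]
    exact ⟨by omega, fun x hx => h.two_le_of_mem_rev x (by simp [hrev, hx])⟩
  · intro y hy
    have hrev' := h.rrcfWith_rev (1 + y) (by positivity)
    simp only [hrev, List.reverse_cons, rrcfWith_concat] at hrev'
    simp only [child, hrev, List.headD_cons, List.tail_cons, List.reverse_cons, rrcfWith_concat]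
    convert hrev' using 2 <;> push_cast <;> ring

lemma Valid.child {s : Node} (h : Valid s) : ∀ t, Valid (s.child t)
  | true => h.child_true
  | false => h.child_false

lemma Valid.descend {s : Node} (h : Valid s) (p : List Bool) : Valid (s.descend p) := by
  induction p generalizing s with
  | nil => exact h
  | cons t p ih => exact ih (h.child t)

lemma valid_node (p : List Bool) : Valid (node p) := valid_root.descend p

namespace Valid

variable {s : Node}

lemma lo_lt_mid (h : Valid s) : s.lo < s.mid := by
  have hb : (0 : ℚ) < s.b := by exact_mod_cast h.b_pos
  have hbd : (0 : ℚ) < ((s.b + s.d : ℕ) : ℚ) := by have := h.b_pos; positivity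
  rw [lo, mid, div_lt_div_iff₀ hb hbd]
  exact_mod_cast (by nlinarith [h.det] : s.a * (s.b + s.d) < (s.a + s.c) * s.b)

lemma mid_lt_hi (h : Valid s) : s.mid < s.hi := by
  have hd : (0 : ℚ) < s.d := by exact_mod_cast h.d_pos
  have hbd : (0 : ℚ) < ((s.b + s.d : ℕ) : ℚ) := by have := h.b_pos; positivity
  rw [hi, mid, div_lt_div_iff₀ hbd hd]
  exact_mod_cast (by nlinarith [h.det] : (s.a + s.c) * s.d < s.c * (s.b + s.d))

lemma lo_lt_hi (h : Valid s) : s.lo < s.hi := h.lo_lt_mid.trans h.mid_lt_hi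

lemma hi_le_one (h : Valid s) : s.hi ≤ 1 := by
  rw [hi, div_le_one (by exact_mod_cast h.d_pos)]
  exact_mod_cast h.c_le_d

lemma mid_pos (h : Valid s) : 0 < s.mid := s.lo_nonneg.trans_lt h.lo_lt_mid

lemma mid_lt_one (h : Valid s) : s.mid < 1 := h.mid_lt_hi.trans_le h.hi_le_one

lemma hi_sub_lo (h : Valid s) : s.hi - s.lo = 1 / (s.b * s.d) := by
  have hb : (s.b : ℚ) ≠ 0 := by exact_mod_cast h.b_pos.ne'
  have hd : (s.d : ℚ) ≠ 0 := by exact_mod_cast h.d_pos.ne'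
  have hdet : (s.c : ℚ) * s.b = s.a * s.d + 1 := by exact_mod_cast h.det
  rw [hi, lo]
  field_simp
  linear_combination hdet

lemma Ioo_descend_subset (h : Valid s) (p : List Bool) :
    Ioo (s.descend p).lo (s.descend p).hi ⊆ Ioo s.lo s.hi := by
  induction p generalizing s with
  | nil => exact subset_rfl
  | cons t p ih =>
    refine (ih (h.child t)).trans (Ioo_subset_Ioo ?_ ?_)
    · cases t
      · exact le_rfl
      · exact h.lo_lt_mid.le
    · cases t
      · exact h.mid_lt_hi.le
      · exact le_rfl

lemma mid_descend_mem_Ioo (h : Valid s) (p : List Bool) :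
    (s.descend p).mid ∈ Ioo s.lo s.hi :=
  h.Ioo_descend_subset p ⟨(h.descend p).lo_lt_mid, (h.descend p).mid_lt_hi⟩

/-- The intervals of the tree are nested or disjoint. -/
lemma mid_descend_not_mem_Ioo (h : Valid s) {p q : List Bool} (hpq : ¬ p <+: q) :
    (s.descend q).mid ∉ Ioo (s.descend p).lo (s.descend p).hi := by
  induction p generalizing s q with
  | nil => exact absurd q.nil_prefix hpq
  | cons t p ih =>
    intro hmem
    have hsub := (h.child t).Ioo_descend_subset p hmem
    cases q with
    | nil => exact mid_not_mem_Ioo_child s t hsub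
    | cons t' q =>
      by_cases htt' : t = t'
      · subst htt'
        exact ih (h.child t) (fun hp => hpq (List.cons_prefix_cons.2 ⟨rfl, hp⟩)) hmem
      · have hq := (h.child t').mid_descend_mem_Ioo q
        simp only [descend_cons, mem_Ioo] at hsub hq
        cases t <;> cases t' <;> simp_all <;> linarith

lemma mid_descend_injective (h : Valid s) : Function.Injective fun p => (s.descend p).mid := by
  have hprefix {p q : List Bool} (hpq : (s.descend p).mid = (s.descend q).mid) : p <+: q := by
    by_contra hn
    exact h.mid_descend_not_mem_Ioo hn
      (hpq ▸ ⟨(h.descend p).lo_lt_mid, (h.descend p).mid_lt_hi⟩)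
  intro p q hpq
  exact (hprefix hpq).eq_of_length_le (hprefix hpq.symm).length_le

end Valid

lemma lo_node_eq (p : List Bool) :
    (node p).lo = 0 ∨ ∃ q r, p = q ++ true :: r ∧ (node p).lo = (node q).mid := by
  induction p using List.reverseRecOn with
  | nil => exact Or.inl lo_node_nil
  | append_singleton p t ih =>
    cases t
    · rcases ih with h | ⟨q, r, rfl, h⟩
      · exact Or.inl (by simpa using h)
      · refine Or.inr ⟨q, r ++ [false], by simp, ?_⟩
        rw [← h, node_concat]
        rfl
    · exact Or.inr ⟨p, [], rfl, by simp⟩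

lemma hi_node_eq (p : List Bool) :
    (node p).hi = 1 ∨ ∃ q r, p = q ++ false :: r ∧ (node p).hi = (node q).mid := by
  induction p using List.reverseRecOn with
  | nil => exact Or.inl hi_node_nil
  | append_singleton p t ih =>
    cases t
    · exact Or.inr ⟨p, [], rfl, by simp⟩
    · rcases ih with h | ⟨q, r, rfl, h⟩
      · exact Or.inl (by simpa using h)
      · refine Or.inr ⟨q, r ++ [true], by simp, ?_⟩
        rw [← h, node_concat]
        rfl

lemma lo_descend_replicate_false (s : Node) (k : ℕ) :
    (s.descend (List.replicate k false)).lo = s.lo := by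
  induction k generalizing s with
  | zero => rfl
  | succ k ih => rw [List.replicate_succ, descend_cons, ih, lo_child_false]

lemma num_den_natCast_div {a b : ℕ} (hb : 0 < b) (hab : Nat.Coprime a b) :
    ((a : ℚ) / b).num = a ∧ ((a : ℚ) / b).den = b := by
  have hb' : (0 : ℤ) < b := by exact_mod_cast hb
  have hab' : Nat.Coprime (a : ℤ).natAbs (b : ℤ).natAbs := by simpa using hab
  have hcast : (a : ℚ) / b = ((a : ℤ) : ℚ) / ((b : ℤ) : ℚ) := by push_cast; rfl
  rw [hcast]
  exact ⟨Rat.num_div_eq_of_coprime hb' hab',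
    by exact_mod_cast Rat.den_div_eq_of_coprime hb' hab'⟩

lemma Valid.mediant_lo_hi {s : Node} (h : Valid s) : mediant s.lo s.hi = s.mid := by
  have hdet : (s.c : ℤ) * s.b + (-s.d) * s.a = 1 := by
    have := congrArg (Nat.cast : ℕ → ℤ) h.det
    push_cast at this
    linear_combination this
  have hab : Nat.Coprime s.a s.b :=
    Nat.isCoprime_iff_coprime.mp ⟨-s.d, s.c, by linear_combination hdet⟩
  have hcd : Nat.Coprime s.c s.d :=
    Nat.isCoprime_iff_coprime.mp ⟨s.b, -s.a, by linear_combination hdet⟩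
  obtain ⟨hna, hdb⟩ := num_den_natCast_div h.b_pos hab
  obtain ⟨hnc, hdd⟩ := num_den_natCast_div h.d_pos hcd
  rw [mediant, lo, hi, hna, hdb, hnc, hdd, mid]
  push_cast
  rfl

def treeLevels (n : ℕ) : Set ℚ :=
  insert 0 (insert 1 ((fun p => (node p).mid) '' {p | p.length < n}))

lemma mem_treeLevels_le_one {n : ℕ} {x : ℚ} (hx : x ∈ treeLevels n) : x ≤ 1 := by
  rcases hx with rfl | rfl | ⟨p, -, rfl⟩
  · exact zero_le_one
  · exact le_rfl
  · exact (valid_node p).mid_lt_one.le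

lemma lo_mem_treeLevels {n : ℕ} {p : List Bool} (hp : p.length ≤ n) :
    (node p).lo ∈ treeLevels n := by
  rcases lo_node_eq p with h | ⟨q, r, rfl, h⟩
  · exact Or.inl h
  · simp only [List.length_append, List.length_cons] at hp
    exact Or.inr (Or.inr ⟨q, show q.length < n by omega, h.symm⟩)

lemma hi_mem_treeLevels {n : ℕ} {p : List Bool} (hp : p.length ≤ n) :
    (node p).hi ∈ treeLevels n := by
  rcases hi_node_eq p with h | ⟨q, r, rfl, h⟩
  · exact Or.inr (Or.inl h)
  · simp only [List.length_append, List.length_cons] at hp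
    exact Or.inr (Or.inr ⟨q, show q.length < n by omega, h.symm⟩)

lemma isConsecutive_treeLevels {p : List Bool} :
    IsConsecutive (treeLevels p.length) (node p).lo (node p).hi := by
  refine ⟨lo_mem_treeLevels le_rfl, hi_mem_treeLevels le_rfl, (valid_node p).lo_lt_hi, ?_⟩
  rintro z (rfl | rfl | ⟨q, hq, rfl⟩) hz
  · exact hz.1.not_ge (node p).lo_nonneg
  · exact hz.2.not_ge (valid_node p).hi_le_one
  · have hpq : ¬ p <+: q := fun hpq => (show q.length < p.length from hq).not_ge hpq.length_le
    exact (valid_root.mid_descend_not_mem_Ioo hpq) hz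

lemma exists_lo_eq_of_mem_treeLevels {n : ℕ} {x : ℚ} (hx : x ∈ treeLevels n) (hx1 : x ≠ 1) :
    ∃ p : List Bool, p.length = n ∧ x = (node p).lo := by
  rcases hx with rfl | rfl | ⟨q, hq, rfl⟩
  · refine ⟨List.replicate n false, by simp, ?_⟩
    rw [node, lo_descend_replicate_false]
    simp [root, lo]
  · exact absurd rfl hx1
  · refine ⟨q ++ true :: List.replicate (n - q.length - 1) false, ?_, ?_⟩
    · have : q.length < n := hq
      simp only [List.length_append, List.length_cons, List.length_replicate]
      omega
    · simp [node_append, lo_descend_replicate_false]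

lemma exists_eq_of_isConsecutive_treeLevels {n : ℕ} {x y : ℚ}
    (h : IsConsecutive (treeLevels n) x y) :
    ∃ p : List Bool, p.length = n ∧ x = (node p).lo ∧ y = (node p).hi := by
  obtain ⟨hx, hy, hxy, hbetween⟩ := h
  obtain ⟨p, rfl, rfl⟩ :=
    exists_lo_eq_of_mem_treeLevels hx (hxy.trans_le (mem_treeLevels_le_one hy)).ne
  refine ⟨p, rfl, rfl, le_antisymm ?_ ?_⟩
  · exact not_lt.mp fun h => hbetween _ (hi_mem_treeLevels le_rfl) ⟨(valid_node p).lo_lt_hi, h⟩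
  · exact not_lt.mp fun h => isConsecutive_treeLevels.2.2.2 y hy ⟨hxy, h⟩

lemma sternBrocot_eq_treeLevels (n : ℕ) : sternBrocot n = treeLevels n := by
  induction n with
  | zero => simp [sternBrocot, treeLevels]
  | succ n ih =>
    have hnew : {z | ∃ x y, IsConsecutive (treeLevels n) x y ∧ z = mediant x y} =
        (fun p => (node p).mid) '' {p | p.length = n} := by
      ext z
      constructor
      · rintro ⟨x, y, hxy, rfl⟩
        obtain ⟨p, hp, rfl, rfl⟩ := exists_eq_of_isConsecutive_treeLevels hxy
        exact ⟨p, hp, (valid_node p).mediant_lo_hi.symm⟩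
      · rintro ⟨p, rfl, rfl⟩
        exact ⟨_, _, isConsecutive_treeLevels, (valid_node p).mediant_lo_hi.symm⟩
    have hlevels : treeLevels (n + 1) =
        treeLevels n ∪ (fun p => (node p).mid) '' {p | p.length = n} := by
      simp only [treeLevels, Nat.lt_succ_iff_lt_or_eq, ofPred_or, image_union, insert_union]
    rw [sternBrocot, ih, hnew, hlevels]

lemma isConsecutive_sternBrocot (p : List Bool) :
    IsConsecutive (sternBrocot p.length) (node p).lo (node p).hi :=
  sternBrocot_eq_treeLevels _ ▸ isConsecutive_treeLevels

/-- The mediant of `node p` has `L = weight p + 2` (`sum_rev_node`). -/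
def weight : List Bool → ℕ
  | [] => 0
  | true :: p => weight p + 1
  | false :: p => weight p + 2

lemma weight_append (p q : List Bool) : weight (p ++ q) = weight p + weight q := by
  induction p with
  | nil => simp [weight]
  | cons t p ih => cases t <;> simp only [List.cons_append, weight, ih] <;> omega

lemma sum_rev_descend {s : Node} (h : Valid s) (p : List Bool) :
    (s.descend p).rev.sum = s.rev.sum + weight p := by
  induction p generalizing s with
  | nil => rfl
  | cons t p ih =>
    rw [descend_cons, ih (h.child t)]
    obtain ⟨b₀, r, hrev⟩ := List.exists_cons_of_ne_nil h.rev_ne_nil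
    cases t <;>
      simp only [Node.child, hrev, List.headD_cons, List.tail_cons, List.sum_cons, weight] <;> omega

lemma sum_rev_node (p : List Bool) : (node p).rev.sum = weight p + 2 := by
  rw [node, sum_rev_descend valid_root]
  simp [root, add_comm]

lemma mid_eq_rrcfVal (p : List Bool) : (node p).mid = rrcfVal (node p).rev.reverse := by
  rw [rrcfVal_eq_rrcfWith, (valid_node p).rrcfWith_rev 1 zero_le_one, mid]
  push_cast
  ring_nf

lemma exists_rev_node_eq {L : List ℕ} (hL : L ≠ []) (h2 : ∀ b ∈ L, 2 ≤ b) :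
    ∃ p : List Bool, (node p).rev = L := by
  induction hs : L.sum using Nat.strong_induction_on generalizing L with
  | _ m ih =>
    obtain ⟨b, t, rfl⟩ := List.exists_cons_of_ne_nil hL
    have hb : 2 ≤ b := h2 b (by simp)
    have ht : ∀ x ∈ t, 2 ≤ x := fun x hx => h2 x (by simp [hx])
    rcases Nat.lt_or_ge 2 b with hb3 | hb2
    · obtain ⟨p, hp⟩ := ih ((b - 1) :: t).sum (by simp only [List.sum_cons] at hs ⊢; omega)
        (List.cons_ne_nil _ _)
        (by simp only [List.mem_cons, forall_eq_or_imp]; exact ⟨by omega, ht⟩) rfl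
      refine ⟨p ++ [true], ?_⟩
      simp only [node_concat, Node.child, hp, List.headD_cons, List.tail_cons]
      congr 1
      omega
    · obtain rfl : b = 2 := by omega
      cases t with
      | nil => exact ⟨[], rfl⟩
      | cons c t =>
        obtain ⟨p, hp⟩ :=
          ih (c :: t).sum (by simp only [List.sum_cons] at hs ⊢; omega) (List.cons_ne_nil _ _)
            ht rfl
        exact ⟨p ++ [false], by simp [child, hp]⟩

lemma Theta_eq (k : ℕ) : Theta k = (fun p => (node p).mid) '' {p | weight p + 1 = k} := by
  ext x
  constructor
  · rintro ⟨-, b, ⟨hb2, rfl⟩, hsum⟩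
    have hb : b ≠ [] := by rintro rfl; simp at hsum
    obtain ⟨p, hp⟩ := exists_rev_node_eq (L := b.reverse) (by simpa using hb)
      (fun x hx => hb2 x (List.mem_reverse.mp hx))
    have hweight := sum_rev_node p
    rw [hp, List.sum_reverse, hsum] at hweight
    refine ⟨p, show weight p + 1 = k by omega, ?_⟩
    simp only [mid_eq_rrcfVal, hp, List.reverse_reverse]
  · rintro ⟨p, rfl, rfl⟩
    have hp := valid_node p
    refine ⟨⟨hp.mid_pos, hp.mid_lt_one⟩, (node p).rev.reverse,
      ⟨fun x hx => hp.two_le_of_mem_rev x (List.mem_reverse.mp hx), mid_eq_rrcfVal p⟩, ?_⟩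
    rw [List.sum_reverse, sum_rev_node]

lemma Xi_eq (n : ℕ) :
    Xi n = insert 0 (insert 1 ((fun p => (node p).mid) '' {p | weight p < n})) := by
  ext x
  simp only [Xi, Theta_eq, Finset.mem_Icc, mem_union, mem_insert_iff, mem_singleton_iff,
    mem_iUnion, mem_image, mem_ofPred_eq, exists_prop, or_assoc]
  constructor
  · rintro (h | h | ⟨k, hk, p, rfl, rfl⟩)
    exacts [Or.inl h, Or.inr (Or.inl h), Or.inr (Or.inr ⟨p, by omega, rfl⟩)]
  · rintro (h | h | ⟨p, hp, rfl⟩)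
    exacts [Or.inl h, Or.inr (Or.inl h), Or.inr (Or.inr ⟨_, ⟨by omega, hp⟩, p, rfl, rfl⟩)]

def pathsLT : ℕ → Finset (List Bool)
  | 0 => ∅
  | 1 => {[]}
  | n + 2 => insert [] ((pathsLT (n + 1)).image (true :: ·) ∪ (pathsLT n).image (false :: ·))

lemma mem_pathsLT {n : ℕ} {p : List Bool} : p ∈ pathsLT n ↔ weight p < n := by
  induction p generalizing n with
  | nil => match n with
    | 0 => simp [pathsLT, weight]
    | 1 => simp [pathsLT, weight]
    | n + 2 => simp [pathsLT, weight]
  | cons t p ih => match n with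
    | 0 => simp [pathsLT]
    | 1 => cases t <;> simp [pathsLT, weight]
    | n + 2 => cases t <;> simp [pathsLT, weight, ih]

lemma card_pathsLT (n : ℕ) : (pathsLT n).card = Nat.fib (n + 2) - 1 := by
  induction n using Nat.strong_induction_on with
  | _ n ih => match n with
    | 0 => rfl
    | 1 => rfl
    | n + 2 =>
      have hdisj :
          Disjoint ((pathsLT (n + 1)).image (true :: ·)) ((pathsLT n).image (false :: ·)) := by
        simp [Finset.disjoint_left]
      rw [pathsLT, Finset.card_insert_of_notMem (by simp), Finset.card_union_of_disjoint hdisj,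
        Finset.card_image_of_injective _ (List.cons_injective),
        Finset.card_image_of_injective _ (List.cons_injective), ih _ (by omega), ih _ (by omega),
        show n + 1 + 2 = n + 3 from rfl, Nat.fib_add_two (n := n + 2),
        show n + 2 + 1 = n + 3 from rfl]
      have := Nat.fib_pos.mpr (show 0 < n + 2 by omega)
      have := Nat.fib_pos.mpr (show 0 < n + 3 by omega)
      omega

lemma coe_pathsLT (n : ℕ) : (pathsLT n : Set (List Bool)) = {p | weight p < n} :=
  Set.ext fun _ => mem_pathsLT

lemma mid_node_injective : Function.Injective fun p => (node p).mid :=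
  valid_root.mid_descend_injective

lemma ncard_Xi (n : ℕ) : (Xi n).ncard = Nat.fib (n + 2) + 1 := by
  rw [Xi_eq, ← coe_pathsLT, Set.ncard_insert_of_notMem, Set.ncard_insert_of_notMem,
    Set.ncard_image_of_injective _ mid_node_injective, Set.ncard_coe_finset, card_pathsLT]
  · have := Nat.fib_pos.mpr (show 0 < n + 2 by omega)
    omega
  · rintro ⟨p, -, hp⟩
    exact (valid_node p).mid_lt_one.ne hp
  · rintro (h | ⟨p, -, hp⟩)
    · exact zero_ne_one h
    · exact (valid_node p).mid_pos.ne' hp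

lemma finite_Xi (n : ℕ) : (Xi n).Finite := by
  rw [Xi_eq, ← coe_pathsLT]
  exact (((pathsLT n).finite_toSet.image _).insert _).insert _

lemma le_one_of_mem_Xi {n : ℕ} {x : ℚ} (hx : x ∈ Xi n) : x ≤ 1 := by
  rw [Xi_eq] at hx
  rcases hx with rfl | rfl | ⟨p, -, rfl⟩
  exacts [zero_le_one, le_rfl, (valid_node p).mid_lt_one.le]

lemma hi_mem_Xi {n : ℕ} {Q : List Bool} (hQ : weight Q < n) : (node Q).hi ∈ Xi n := by
  rw [Xi_eq]
  rcases hi_node_eq Q with h | ⟨q, r, rfl, h⟩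
  · exact Or.inr (Or.inl h)
  · refine Or.inr (Or.inr ⟨q, ?_, h.symm⟩)
    simp only [weight_append, weight] at hQ
    exact (show weight q < n by omega)

lemma Xi_inter_Ioo (n : ℕ) (Q : List Bool) :
    Xi n ∩ Ioo (node Q).lo (node Q).hi =
      (fun q => (node (Q ++ q)).mid) '' {q | weight q < n - weight Q} := by
  ext x
  constructor
  · rintro ⟨hx, hxQ⟩
    rw [Xi_eq] at hx
    rcases hx with rfl | rfl | ⟨p, hp, rfl⟩
    · exact absurd hxQ.1 (node Q).lo_nonneg.not_gt
    · exact absurd hxQ.2 (valid_node Q).hi_le_one.not_gt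
    · obtain ⟨q, rfl⟩ : Q <+: p := by
        by_contra h
        exact valid_root.mid_descend_not_mem_Ioo h hxQ
      refine ⟨q, ?_, rfl⟩
      simp only [mem_ofPred_eq, weight_append] at hp ⊢
      omega
  · rintro ⟨q, hq, rfl⟩
    refine ⟨?_, by simpa only [node_append] using (valid_node Q).mid_descend_mem_Ioo q⟩
    rw [Xi_eq]
    refine Or.inr (Or.inr ⟨Q ++ q, ?_, rfl⟩)
    simp only [mem_ofPred_eq, weight_append] at hq ⊢
    omega

lemma ncard_Xi_inter_Ioc {n : ℕ} {Q : List Bool} (hQ : weight Q < n) :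
    {ξ ∈ Xi n | (node Q).lo < ξ ∧ ξ ≤ (node Q).hi}.ncard = Nat.fib (n + 2 - weight Q) := by
  have hIoc : {ξ ∈ Xi n | (node Q).lo < ξ ∧ ξ ≤ (node Q).hi} =
      insert (node Q).hi (Xi n ∩ Ioo (node Q).lo (node Q).hi) := by
    ext ξ
    simp only [mem_sep_iff, mem_insert_iff, mem_inter_iff, mem_Ioo]
    constructor
    · rintro ⟨hξ, hlo, hhi⟩
      rcases hhi.eq_or_lt with h | h
      exacts [Or.inl h, Or.inr ⟨hξ, hlo, h⟩]
    · rintro (rfl | ⟨hξ, hlo, hhi⟩)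
      exacts [⟨hi_mem_Xi hQ, (valid_node Q).lo_lt_hi, le_rfl⟩, ⟨hξ, hlo, hhi.le⟩]
  have hinj : Function.Injective fun q => (node (Q ++ q)).mid :=
    mid_node_injective.comp fun _ _ => List.append_cancel_left
  rw [hIoc, Set.ncard_insert_of_notMem (fun h => h.2.2.false) ((finite_Xi n).inter_of_left _),
    Xi_inter_Ioo, ← coe_pathsLT, Set.ncard_image_of_injective _ hinj, Set.ncard_coe_finset,
    card_pathsLT]
  have := Nat.fib_pos.mpr (show 0 < n - weight Q + 2 by omega)
  rw [show n + 2 - weight Q = n - weight Q + 2 by omega]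
  omega

lemma ncard_sep_le_eq_add {α : Type*} [LinearOrder α] {S : Set α} (hS : S.Finite) {u v : α}
    (huv : u ≤ v) :
    {x ∈ S | x ≤ v}.ncard = {x ∈ S | x ≤ u}.ncard + {x ∈ S | u < x ∧ x ≤ v}.ncard := by
  rw [← Set.ncard_union_eq _ (hS.subset (sep_subset _ _)) (hS.subset (sep_subset _ _))]
  · congr 1
    ext x
    simp only [mem_sep_iff, mem_union]
    constructor
    · rintro ⟨hx, hxv⟩
      exact (le_or_gt x u).imp (⟨hx, ·⟩) (⟨hx, ·, hxv⟩)
    · rintro (⟨hx, hxu⟩ | ⟨hx, -, hxv⟩)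
      exacts [⟨hx, hxu.trans huv⟩, ⟨hx, hxv⟩]
  · exact Set.disjoint_left.mpr fun x hxu hx => hxu.2.not_gt hx.2.1

noncomputable def distrib (n : ℕ) (x : ℝ) : ℝ :=
  ({ξ ∈ Xi n | (ξ : ℝ) ≤ x}.ncard : ℝ) / (Xi n).ncard

lemma distrib_ratCast (n : ℕ) (q : ℚ) :
    distrib n q = ({ξ ∈ Xi n | ξ ≤ q}.ncard : ℝ) / (Xi n).ncard := by
  simp only [distrib, Rat.cast_le]

lemma distrib_mono (n : ℕ) : Monotone (distrib n) := fun x y hxy => by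
  refine div_le_div_of_nonneg_right ?_ (Nat.cast_nonneg _)
  have hsub : {ξ ∈ Xi n | (ξ : ℝ) ≤ x} ⊆ {ξ ∈ Xi n | (ξ : ℝ) ≤ y} :=
    fun ξ hξ => ⟨hξ.1, hξ.2.trans hxy⟩
  exact_mod_cast Set.ncard_le_ncard hsub ((finite_Xi n).subset (sep_subset _ _))

lemma distrib_one (n : ℕ) : distrib n 1 = 1 := by
  have hXi : {ξ ∈ Xi n | ξ ≤ 1} = Xi n :=
    sep_eq_self_iff_mem_true.mpr fun _ => le_one_of_mem_Xi
  have hpos : ((Xi n).ncard : ℝ) ≠ 0 := by rw [ncard_Xi]; positivity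
  simpa [hXi, hpos] using distrib_ratCast n 1

lemma distrib_hi_sub_distrib_lo {n : ℕ} {Q : List Bool} (hQ : weight Q < n) :
    distrib n (node Q).hi - distrib n (node Q).lo =
      Nat.fib (n + 2 - weight Q) / (Nat.fib (n + 2) + 1) := by
  rw [distrib_ratCast, distrib_ratCast, ← sub_div,
    ncard_sep_le_eq_add (finite_Xi n) (valid_node Q).lo_lt_hi.le, ncard_Xi_inter_Ioc hQ, ncard_Xi]
  push_cast
  ring

open Real in
lemma tendsto_fib_div_goldenRatio_pow :
    Tendsto (fun n => (Nat.fib n : ℝ) / φ ^ n) atTop (𝓝 (1 / √5)) := by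
  have hψφ : |ψ / φ| < 1 := by
    rw [abs_div, abs_of_pos goldenRatio_pos, div_lt_one goldenRatio_pos, abs_of_neg goldenConj_neg]
    linarith [neg_one_lt_goldenConj, one_lt_goldenRatio]
  have h := ((tendsto_pow_atTop_nhds_zero_of_abs_lt_one hψφ).const_sub 1).div_const √5
  rw [sub_zero] at h
  refine h.congr fun n => ?_
  have : φ ^ n ≠ 0 := pow_ne_zero _ goldenRatio_ne_zero
  rw [coe_fib_eq, div_pow]
  field_simp

open Real in
lemma tendsto_fib_sub_div_fib_add_one (k : ℕ) :
    Tendsto (fun n => (Nat.fib (n - k) : ℝ) / (Nat.fib n + 1)) atTop (𝓝 (φ⁻¹ ^ k)) := by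
  have hinv : Tendsto (fun n => (φ ^ n)⁻¹) atTop (𝓝 0) :=
    tendsto_inv_atTop_zero.comp (tendsto_pow_atTop_atTop_of_one_lt one_lt_goldenRatio)
  have h := ((tendsto_fib_div_goldenRatio_pow.comp (tendsto_sub_atTop_nat k)).div
    (tendsto_fib_div_goldenRatio_pow.add hinv) (by positivity)).mul_const (φ⁻¹ ^ k)
  rw [add_zero, div_self (by positivity), one_mul] at h
  refine h.congr' ((eventually_ge_atTop k).mono fun n hn => ?_)
  have hφ : φ ^ n = φ ^ (n - k) * φ ^ k := by rw [← pow_add, Nat.sub_add_cancel hn]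
  have : φ ^ (n - k) ≠ 0 := pow_ne_zero _ goldenRatio_ne_zero
  have : φ ^ k ≠ 0 := pow_ne_zero _ goldenRatio_ne_zero
  simp only [Pi.div_apply, Function.comp_apply]
  rw [hφ, inv_pow]
  field_simp

lemma tendsto_distrib_hi_sub_lo (Q : List Bool) :
    Tendsto (fun n => distrib n (node Q).hi - distrib n (node Q).lo) atTop
      (𝓝 (φ⁻¹ ^ weight Q)) :=
  ((tendsto_fib_sub_div_fib_add_one _).comp (tendsto_add_atTop_nat 2)).congr'
    ((eventually_gt_atTop (weight Q)).mono fun _ hn => (distrib_hi_sub_distrib_lo hn).symm)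

open Real in
lemma three_sub_sqrt_five_div_two : (3 - √5) / 2 = φ⁻¹ ^ 2 := by
  rw [inv_goldenRatio, neg_sq, goldenConj_sq, goldenConj]
  ring

lemma goldenRatio_inv_add_sq : φ⁻¹ + φ⁻¹ ^ 2 = 1 := by
  rw [Real.inv_goldenRatio, neg_sq, Real.goldenConj_sq]
  ring

def IsMediantRecursive (g : ℝ → ℝ) (c : ℝ) : Prop :=
  ∀ n : ℕ, ∀ x y : ℚ, IsConsecutive (sternBrocot n) x y →
    g ((mediant x y : ℚ) : ℝ) = g (x : ℝ) + c * (g (y : ℝ) - g (x : ℝ))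

variable {g : ℝ → ℝ}

lemma IsMediantRecursive.apply_mid {c : ℝ} (hrec : IsMediantRecursive g c) (P : List Bool) :
    g (node P).mid = g (node P).lo + c * (g (node P).hi - g (node P).lo) := by
  simpa only [(valid_node P).mediant_lo_hi] using hrec _ _ _ (isConsecutive_sternBrocot P)

/-- The limit at the left end of a right child, a mediant, needs the `g`-mass of its parent's
interval, so the two claims are proved together. -/
lemma tendsto_distrib_lo_and_apply_hi_sub_apply_lo (hg0 : g 0 = 0) (hg1 : g 1 = 1)
    (hrec : IsMediantRecursive g ((3 - √5) / 2)) (P : List Bool) :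
    Tendsto (fun n => distrib n (node P).lo) atTop (𝓝 (g (node P).lo)) ∧
      g (node P).hi - g (node P).lo = φ⁻¹ ^ weight P := by
  induction P using List.reverseRecOn with
  | nil =>
    simp only [lo_node_nil, hi_node_nil, Rat.cast_zero, Rat.cast_one, hg0, hg1, weight, pow_zero,
      sub_zero, and_true]
    have h := (tendsto_distrib_hi_sub_lo []).const_sub 1
    simp only [hi_node_nil, lo_node_nil, Rat.cast_one, Rat.cast_zero, distrib_one, weight,
      pow_zero, sub_sub_cancel, sub_self] at h
    exact h
  | append_singleton P t ih =>
    obtain ⟨hlo, hwidth⟩ := ih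
    have hmid : g (node P).mid = g (node P).lo + φ⁻¹ ^ (weight P + 2) := by
      rw [hrec.apply_mid, hwidth, three_sub_sqrt_five_div_two, pow_add, mul_comm]
    cases t
    · simp only [node_concat, lo_child_false, hi_child_false, weight_append, weight, zero_add]
      exact ⟨hlo, by rw [hmid]; ring⟩
    · simp only [node_concat, lo_child_true, hi_child_true, weight_append, weight, zero_add]
      constructor
      · have h := hlo.add (tendsto_distrib_hi_sub_lo (P ++ [false]))
        simp only [node_concat, lo_child_false, hi_child_false, weight_append, weight, zero_add,
          add_sub_cancel] at h
        rwa [hmid]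
      · rw [hmid]
        linear_combination hwidth - φ⁻¹ ^ weight P * goldenRatio_inv_add_sq

lemma tendsto_distrib_hi (hg0 : g 0 = 0) (hg1 : g 1 = 1)
    (hrec : IsMediantRecursive g ((3 - √5) / 2)) (P : List Bool) :
    Tendsto (fun n => distrib n (node P).hi) atTop (𝓝 (g (node P).hi)) := by
  obtain ⟨hlo, hwidth⟩ := tendsto_distrib_lo_and_apply_hi_sub_apply_lo hg0 hg1 hrec P
  have h := hlo.add (tendsto_distrib_hi_sub_lo P)
  simp only [add_sub_cancel] at h
  rwa [← hwidth, add_sub_cancel] at h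

lemma exists_node_lo_le_le_hi {x : ℝ} (hx0 : 0 ≤ x) (hx1 : x ≤ 1) (m : ℕ) :
    ∃ P : List Bool, P.length = m ∧ ((node P).lo : ℝ) ≤ x ∧ x ≤ (node P).hi := by
  induction m with
  | zero => exact ⟨[], rfl, by simpa using hx0, by simpa using hx1⟩
  | succ m ih =>
    obtain ⟨P, rfl, hlo, hhi⟩ := ih
    rcases le_or_gt x (node P).mid with h | h
    · exact ⟨P ++ [false], by simp, by simpa using hlo, by simpa using h⟩
    · exact ⟨P ++ [true], by simp, by simpa using h.le, by simpa using hhi⟩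

lemma Valid.mul_add_length_le {s : Node} (h : Valid s) (p : List Bool) :
    s.b * s.d + p.length ≤ (s.descend p).b * (s.descend p).d := by
  induction p generalizing s with
  | nil => rfl
  | cons t p ih =>
    refine le_trans ?_ (ih (h.child t))
    have := h.b_pos
    have := h.d_pos
    cases t <;> simp only [Node.child, List.length_cons] <;> nlinarith

lemma hi_sub_lo_node_le (P : List Bool) :
    (node P).hi - (node P).lo ≤ 1 / ((P.length : ℚ) + 1) := by
  have hbd : 1 * 1 + P.length ≤ (node P).b * (node P).d := valid_root.mul_add_length_le P
  rw [(valid_node P).hi_sub_lo]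
  gcongr
  exact_mod_cast (by omega : P.length + 1 ≤ (node P).b * (node P).d)

lemma exists_node_bracket {x : ℝ} (hx0 : 0 ≤ x) (hx1 : x ≤ 1) (m : ℕ) :
    ∃ P : List Bool, ((node P).lo : ℝ) ≤ x ∧ x ≤ (node P).hi ∧
      ((node P).hi : ℝ) - (node P).lo ≤ 1 / (m + 1) := by
  obtain ⟨P, rfl, hlo, hhi⟩ := exists_node_lo_le_le_hi hx0 hx1 m
  refine ⟨P, hlo, hhi, ?_⟩
  have h := Rat.cast_le (K := ℝ) |>.mpr (hi_sub_lo_node_le P)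
  push_cast at h
  exact h

lemma tendsto_of_monotone_of_brackets {D : ℕ → ℝ → ℝ} {g : ℝ → ℝ} {s : Set ℝ} {x : ℝ}
    (hD : ∀ n, Monotone (D n)) (hg : ContinuousWithinAt g s x)
    (hbr : ∀ δ > 0, ∃ u ∈ s, ∃ v ∈ s, u ≤ x ∧ x ≤ v ∧ v - u < δ ∧
      Tendsto (fun n => D n u) atTop (𝓝 (g u)) ∧ Tendsto (fun n => D n v) atTop (𝓝 (g v))) :
    Tendsto (fun n => D n x) atTop (𝓝 (g x)) := by
  refine tendsto_order.2 ⟨fun a ha => ?_, fun a ha => ?_⟩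
  · obtain ⟨δ, hδ, hgδ⟩ := Metric.eventually_nhds_iff.mp
      (eventually_nhdsWithin_iff.mp (hg.eventually_const_lt ha))
    obtain ⟨u, hu, v, -, hux, hxv, hvu, hlim, -⟩ := hbr δ hδ
    have hau : a < g u := hgδ (by rw [Real.dist_eq, abs_of_nonpos (by linarith)]; linarith) hu
    exact (hlim.eventually_const_lt hau).mono fun n hn => hn.trans_le (hD n hux)
  · obtain ⟨δ, hδ, hgδ⟩ := Metric.eventually_nhds_iff.mp
      (eventually_nhdsWithin_iff.mp (hg.eventually_lt_const ha))
    obtain ⟨u, -, v, hv, hux, hxv, hvu, -, hlim⟩ := hbr δ hδ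
    have hva : g v < a := hgδ (by rw [Real.dist_eq, abs_of_nonneg (by linarith)]; linarith) hv
    exact (hlim.eventually_lt_const hva).mono fun n hn => (hD n hxv).trans_lt hn

end TichyUitz

/-- For `λ = (3 − √5)/2 = τ²`, the Tichy–Uitz function `g_λ`
(defined on rationals by the mediant recursion and extended continuously)
is the limit distribution function of the sequences `Ξ_n`. -/
theorem tichyUitz_is_distribution_of_Xi
    (g : ℝ → ℝ)
    (hg0 : g 0 = 0) (hg1 : g 1 = 1)
    (hgc : ContinuousOn g (Set.Icc (0 : ℝ) 1))
    (hrec : ∀ n : ℕ, ∀ x y : ℚ, IsConsecutive (sternBrocot n) x y →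
      g ((mediant x y : ℚ) : ℝ) =
        g (x : ℝ) + (3 - Real.sqrt 5) / 2 * (g (y : ℝ) - g (x : ℝ))) :
    ∀ x ∈ Set.Ioo (0 : ℝ) 1,
      Filter.Tendsto
        (fun n : ℕ =>
          (({ξ ∈ Xi n | (ξ : ℝ) ≤ x}).ncard : ℝ) / ((Xi n).ncard : ℝ))
        Filter.atTop (nhds (g x)) := by
  open TichyUitz in
  intro x hx
  refine tendsto_of_monotone_of_brackets distrib_mono (hgc x (Ioo_subset_Icc_self hx)) ?_
  intro δ hδ
  obtain ⟨m, hm⟩ := exists_nat_one_div_lt hδ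
  obtain ⟨P, hlo, hhi, hwidth⟩ := exists_node_bracket hx.1.le hx.2.le m
  exact ⟨_, ⟨by exact_mod_cast (node P).lo_nonneg, hlo.trans hx.2.le⟩,
    _, ⟨hx.1.le.trans hhi, by exact_mod_cast (valid_node P).hi_le_one⟩,
    hlo, hhi, hwidth.trans_lt hm,
    (tendsto_distrib_lo_and_apply_hi_sub_apply_lo hg0 hg1 hrec P).1,
    tendsto_distrib_hi hg0 hg1 hrec P⟩
end

section
/- Let λ ∈ (0,1) and let x ∈ (0,1) be rational with regular continued fraction expansion x = [0; a_1, …, a_m] (a_i positive integers, a_m ≥ 2). Then g_λ(x) = Σ_{j=1}^{m} (−1)^{j+1} · λ^{(Σ_{1≤i≤j, i odd} a_i) − 1} · (1−λ)^{Σ_{1≤i≤j, i even} a_i}. In particular g_λ(1/a_1) = λ^{a_1−1}. -/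
open Set Filter

/-!
The maps `L x = x / (1 + x)` (`leftMap`) and `x ↦ 1 - x` commute with mediants of reduced
fractions, `L` maps `ℱ_n` increasingly onto `ℱ_{n+1} ∩ [0, 1/2]`, and `x ↦ 1 - x` reverses
`ℱ_n`. Hence `g_λ (L x) = λ g_λ x`, and `x ↦ 1 - g_λ (1 - x)` satisfies the relations of
`g_{1-λ}`. Since `[0; a, t] = L^(a-1) (1 - L [0; t])`, this gives
`g_λ [0; a, t] = λ^(a-1) (1 - (1 - λ) g_{1-λ} [0; t])`, and induction on the expansion, with
`λ` and `1 - λ` trading places at each step, produces the alternating sum.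
-/

lemma mediant_eq_div (x y : ℚ) : mediant x y = (x.num + y.num) / (x.den + y.den) := by
  simp [mediant]

lemma mediant_mem_Ioo {x y : ℚ} (h : x < y) : mediant x y ∈ Ioo x y := by
  have hx : (0 : ℚ) < x.den := mod_cast x.pos
  have hy : (0 : ℚ) < y.den := mod_cast y.pos
  rw [← Rat.num_div_den x, ← Rat.num_div_den y, div_lt_div_iff₀ hx hy] at h
  rw [mediant_eq_div]
  constructor
  · conv_lhs => rw [← Rat.num_div_den x]
    rw [div_lt_div_iff₀ hx (by positivity)]
    nlinarith
  · conv_rhs => rw [← Rat.num_div_den y]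
    rw [div_lt_div_iff₀ (by positivity) hy]
    nlinarith

lemma Rat.one_sub_den (q : ℚ) : (1 - q).den = q.den := by
  rw [← neg_sub, Rat.den_neg_eq_den]
  exact_mod_cast Rat.sub_intCast_den q 1

lemma mediant_one_sub (x y : ℚ) : mediant (1 - y) (1 - x) = 1 - mediant x y := by
  have hx : (0 : ℚ) < x.den := mod_cast x.pos
  have hy : (0 : ℚ) < y.den := mod_cast y.pos
  simp only [mediant_eq_div, ← Rat.mul_den_eq_num, Rat.one_sub_den]
  field_simp
  ring

lemma strictAnti_one_sub : StrictAnti fun x : ℚ => 1 - x :=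
  fun _ _ h => sub_lt_sub_left h 1

def leftMap (x : ℚ) : ℚ := x / (1 + x)

lemma leftMap_div {p q : ℚ} (hp : 0 ≤ p) (hq : 0 < q) : leftMap (p / q) = p / (p + q) := by
  unfold leftMap
  field_simp
  ring

lemma leftMap_num_den {x : ℚ} (hx : 0 ≤ x) :
    (leftMap x).num = x.num ∧ ((leftMap x).den : ℤ) = x.num + x.den := by
  have hnum : 0 ≤ x.num := Rat.num_nonneg.mpr hx
  have hpos : 0 < x.num + x.den := by have := x.pos; omega
  have hcop : Nat.Coprime x.num.natAbs (x.num + x.den).natAbs := by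
    rw [show (x.num + x.den).natAbs = x.den + x.num.natAbs by omega]
    exact Nat.coprime_add_self_right.mpr x.reduced
  have hval : leftMap x = ((x.num : ℤ) : ℚ) / ((x.num + x.den : ℤ) : ℚ) := by
    conv_lhs => rw [← Rat.num_div_den x]
    rw [leftMap_div (mod_cast hnum) (mod_cast x.pos)]
    push_cast
    rfl
  rw [hval]
  exact ⟨Rat.num_div_eq_of_coprime hpos hcop, Rat.den_div_eq_of_coprime hpos hcop⟩

lemma mediant_leftMap {x y : ℚ} (hx : 0 ≤ x) (hy : 0 ≤ y) :
    mediant (leftMap x) (leftMap y) = leftMap (mediant x y) := by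
  obtain ⟨hxn, hxd⟩ := leftMap_num_den hx
  obtain ⟨hyn, hyd⟩ := leftMap_num_den hy
  have hxd' : ((leftMap x).den : ℚ) = x.num + x.den := by exact_mod_cast hxd
  have hyd' : ((leftMap y).den : ℚ) = y.num + y.den := by exact_mod_cast hyd
  have hx0 : (0 : ℚ) ≤ x.num := mod_cast Rat.num_nonneg.mpr hx
  have hy0 : (0 : ℚ) ≤ y.num := mod_cast Rat.num_nonneg.mpr hy
  have hxd0 : (0 : ℚ) < x.den := mod_cast x.pos
  rw [mediant_eq_div, mediant_eq_div, hxn, hyn, hxd', hyd',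
    leftMap_div (by positivity) (by positivity)]
  ring_nf

lemma strictMonoOn_leftMap : StrictMonoOn leftMap (Ici 0) := by
  intro x hx y hy hxy
  simp only [mem_Ici] at hx hy
  unfold leftMap
  rw [div_lt_div_iff₀ (by linarith) (by linarith)]
  linarith

def mediants (S : Set ℚ) : Set ℚ :=
  {z | ∃ x y : ℚ, IsConsecutive S x y ∧ z = mediant x y}

lemma sternBrocot_succ (n : ℕ) :
    sternBrocot (n + 1) = sternBrocot n ∪ mediants (sternBrocot n) :=
  rfl

section Consecutive

variable {S : Set ℚ} {f : ℚ → ℚ} {x y : ℚ}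

lemma isConsecutive_image_iff_of_strictMonoOn (hf : StrictMonoOn f S) (hx : x ∈ S)
    (hy : y ∈ S) :
    IsConsecutive (f '' S) (f x) (f y) ↔ IsConsecutive S x y := by
  simp only [IsConsecutive, mem_image_of_mem f hx, mem_image_of_mem f hy, hx, hy,
    hf.lt_iff_lt hx hy, forall_mem_image, true_and]
  refine and_congr_right' (forall₂_congr fun z hz => ?_)
  rw [hf.lt_iff_lt hx hz, hf.lt_iff_lt hz hy]

lemma isConsecutive_image_iff_of_strictAntiOn (hf : StrictAntiOn f S) (hx : x ∈ S)
    (hy : y ∈ S) :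
    IsConsecutive (f '' S) (f y) (f x) ↔ IsConsecutive S x y := by
  simp only [IsConsecutive, mem_image_of_mem f hx, mem_image_of_mem f hy, hx, hy,
    hf.lt_iff_gt hy hx, forall_mem_image, true_and]
  refine and_congr_right' (forall₂_congr fun z hz => ?_)
  rw [hf.lt_iff_gt hy hz, hf.lt_iff_gt hz hx, and_comm]

lemma image_mediants_of_strictMonoOn (hf : StrictMonoOn f S)
    (hmed : ∀ x ∈ S, ∀ y ∈ S, f (mediant x y) = mediant (f x) (f y)) :
    f '' mediants S = mediants (f '' S) := by
  ext z
  constructor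
  · rintro ⟨_, ⟨x, y, hxy, rfl⟩, rfl⟩
    exact ⟨f x, f y, (isConsecutive_image_iff_of_strictMonoOn hf hxy.1 hxy.2.1).mpr hxy,
      hmed x hxy.1 y hxy.2.1⟩
  · rintro ⟨_, _, hxy, rfl⟩
    obtain ⟨x, hx, rfl⟩ := hxy.1
    obtain ⟨y, hy, rfl⟩ := hxy.2.1
    refine ⟨mediant x y, ⟨x, y, ?_, rfl⟩, hmed x hx y hy⟩
    exact (isConsecutive_image_iff_of_strictMonoOn hf hx hy).mp hxy

lemma image_mediants_of_strictAntiOn (hf : StrictAntiOn f S)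
    (hmed : ∀ x ∈ S, ∀ y ∈ S, f (mediant x y) = mediant (f y) (f x)) :
    f '' mediants S = mediants (f '' S) := by
  ext z
  constructor
  · rintro ⟨_, ⟨x, y, hxy, rfl⟩, rfl⟩
    exact ⟨f y, f x, (isConsecutive_image_iff_of_strictAntiOn hf hxy.1 hxy.2.1).mpr hxy,
      hmed x hxy.1 y hxy.2.1⟩
  · rintro ⟨_, _, hxy, rfl⟩
    obtain ⟨y, hy, rfl⟩ := hxy.1
    obtain ⟨x, hx, rfl⟩ := hxy.2.1
    refine ⟨mediant x y, ⟨x, y, ?_, rfl⟩, hmed x hx y hy⟩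
    exact (isConsecutive_image_iff_of_strictAntiOn hf hx hy).mp hxy

lemma isConsecutive_inter_Icc_iff {a b : ℚ} :
    IsConsecutive (S ∩ Icc a b) x y ↔
      IsConsecutive S x y ∧ x ∈ Icc a b ∧ y ∈ Icc a b := by
  constructor
  · rintro ⟨hx, hy, hxy, hbet⟩
    refine ⟨⟨hx.1, hy.1, hxy, fun z hz hzxy => hbet z ⟨hz, ?_⟩ hzxy⟩, hx.2, hy.2⟩
    exact ⟨hx.2.1.trans hzxy.1.le, hzxy.2.le.trans hy.2.2⟩
  · rintro ⟨⟨hx, hy, hxy, hbet⟩, hxI, hyI⟩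
    exact ⟨⟨hx, hxI⟩, ⟨hy, hyI⟩, hxy, fun z hz => hbet z hz.1⟩

/-- Consecutive elements of `S` cannot straddle a point of `S`, so their mediant lies in
`[a, b]` exactly when they do. -/
lemma mediants_inter_Icc {a b : ℚ} (ha : a ∈ S) (hb : b ∈ S) :
    mediants (S ∩ Icc a b) = mediants S ∩ Icc a b := by
  ext z
  simp only [mediants, mem_ofPred_eq, mem_inter_iff, isConsecutive_inter_Icc_iff]
  constructor
  · rintro ⟨x, y, ⟨hxy, hxI, hyI⟩, rfl⟩
    have hm := mediant_mem_Ioo hxy.2.2.1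
    exact ⟨⟨x, y, hxy, rfl⟩, hxI.1.trans hm.1.le, hm.2.le.trans hyI.2⟩
  · rintro ⟨⟨x, y, hxy, rfl⟩, hma, hmb⟩
    have hm := mediant_mem_Ioo hxy.2.2.1
    have hax : a ≤ x := not_lt.mp fun hxa => hxy.2.2.2 a ha ⟨hxa, hma.trans_lt hm.2⟩
    have hyb : y ≤ b := not_lt.mp fun hby => hxy.2.2.2 b hb ⟨hm.1.trans_le hmb, hby⟩
    exact ⟨x, y, ⟨hxy, ⟨hax, hm.1.le.trans (hm.2.le.trans hyb)⟩,
      ⟨hax.trans (hm.1.trans hm.2).le, hyb⟩⟩, rfl⟩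

end Consecutive

lemma isConsecutive_zero_one : IsConsecutive (sternBrocot 0) 0 1 :=
  ⟨by simp [sternBrocot], by simp [sternBrocot], zero_lt_one,
    by rintro z (rfl | rfl) ⟨h0, h1⟩ <;> linarith⟩

lemma mediant_zero_one : mediant 0 1 = 1 / 2 := by
  norm_num [mediant]

lemma mediants_sternBrocot_zero : mediants (sternBrocot 0) = {1 / 2} := by
  ext z
  simp only [mediants, mem_ofPred_eq, mem_singleton_iff]
  constructor
  · rintro ⟨x, y, ⟨hx, hy, hxy, -⟩, rfl⟩
    obtain ⟨rfl, rfl⟩ : x = 0 ∧ y = 1 := by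
      rcases hx with rfl | rfl <;> rcases hy with rfl | rfl <;> norm_num at hxy
      exact ⟨rfl, rfl⟩
    exact mediant_zero_one
  · rintro rfl
    exact ⟨0, 1, isConsecutive_zero_one, mediant_zero_one.symm⟩

lemma sternBrocot_one : sternBrocot 1 = {0, 1 / 2, 1} := by
  rw [sternBrocot_succ, mediants_sternBrocot_zero, sternBrocot]
  ext z
  simp only [mem_union, mem_insert_iff, mem_singleton_iff]
  tauto

lemma sternBrocot_mono : Monotone sternBrocot :=
  monotone_nat_of_le_succ fun _ => subset_union_left

lemma sternBrocot_subset_Icc (n : ℕ) : sternBrocot n ⊆ Icc 0 1 := by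
  induction n with
  | zero => rintro z (rfl | rfl) <;> norm_num
  | succ n ih =>
    rintro z (hz | ⟨x, y, hxy, rfl⟩)
    · exact ih hz
    · have hm := mediant_mem_Ioo hxy.2.2.1
      exact ⟨(ih hxy.1).1.trans hm.1.le, hm.2.le.trans (ih hxy.2.1).2⟩

lemma zero_mem_sternBrocot (n : ℕ) : 0 ∈ sternBrocot n :=
  sternBrocot_mono (Nat.zero_le n) (by simp [sternBrocot])

lemma half_mem_sternBrocot {n : ℕ} (hn : 1 ≤ n) : 1 / 2 ∈ sternBrocot n :=
  sternBrocot_mono hn (by simp [sternBrocot_one])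

lemma strictMonoOn_leftMap_sternBrocot (n : ℕ) : StrictMonoOn leftMap (sternBrocot n) :=
  strictMonoOn_leftMap.mono fun _ hz => (sternBrocot_subset_Icc n hz).1

lemma image_leftMap_sternBrocot (n : ℕ) :
    leftMap '' sternBrocot n = sternBrocot (n + 1) ∩ Icc 0 (1 / 2) := by
  induction n with
  | zero =>
    rw [sternBrocot_one]
    ext z
    simp only [sternBrocot, image_insert_eq, image_singleton, leftMap, mem_insert_iff,
      mem_singleton_iff, mem_inter_iff, mem_Icc]
    constructor
    · rintro (rfl | rfl) <;> norm_num
    · rintro ⟨rfl | rfl | rfl, h⟩ <;> norm_num at h <;> norm_num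
  | succ n ih =>
    have hmono := strictMonoOn_leftMap_sternBrocot n
    have hmed : ∀ x ∈ sternBrocot n, ∀ y ∈ sternBrocot n,
        leftMap (mediant x y) = mediant (leftMap x) (leftMap y) := fun x hx y hy =>
      (mediant_leftMap (sternBrocot_subset_Icc n hx).1 (sternBrocot_subset_Icc n hy).1).symm
    rw [sternBrocot_succ n, image_union, image_mediants_of_strictMonoOn hmono hmed, ih,
      mediants_inter_Icc (zero_mem_sternBrocot _) (half_mem_sternBrocot le_add_self),
      ← union_inter_distrib_right, ← sternBrocot_succ]

lemma image_one_sub_sternBrocot (n : ℕ) : (1 - ·) '' sternBrocot n = sternBrocot n := by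
  induction n with
  | zero =>
    ext z
    simp only [sternBrocot, image_insert_eq, image_singleton, mem_insert_iff, mem_singleton_iff]
    norm_num
    tauto
  | succ n ih =>
    rw [sternBrocot_succ, image_union,
      image_mediants_of_strictAntiOn (strictAnti_one_sub.strictAntiOn _)
        fun x _ y _ => (mediant_one_sub x y).symm, ih]

lemma leftMap_mem_sternBrocot {n : ℕ} {z : ℚ} (hz : z ∈ sternBrocot n) :
    leftMap z ∈ sternBrocot (n + 1) :=
  ((image_leftMap_sternBrocot n).subset (mem_image_of_mem _ hz)).1

lemma one_sub_mem_sternBrocot {n : ℕ} {z : ℚ} (hz : z ∈ sternBrocot n) :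
    1 - z ∈ sternBrocot n :=
  (image_one_sub_sternBrocot n).subset (mem_image_of_mem _ hz)

lemma IsConsecutive.leftMap {n : ℕ} {x y : ℚ} (h : IsConsecutive (sternBrocot n) x y) :
    IsConsecutive (sternBrocot (n + 1)) (leftMap x) (leftMap y) := by
  have hcons := (isConsecutive_image_iff_of_strictMonoOn (strictMonoOn_leftMap_sternBrocot n)
    h.1 h.2.1).mpr h
  rw [image_leftMap_sternBrocot, isConsecutive_inter_Icc_iff] at hcons
  exact hcons.1

lemma IsConsecutive.one_sub {n : ℕ} {x y : ℚ} (h : IsConsecutive (sternBrocot n) x y) :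
    IsConsecutive (sternBrocot n) (1 - y) (1 - x) := by
  have hcons := (isConsecutive_image_iff_of_strictAntiOn (strictAnti_one_sub.strictAntiOn _)
    h.1 h.2.1).mpr h
  rwa [image_one_sub_sternBrocot] at hcons

lemma cfVal_nonneg (a : List ℕ) : 0 ≤ cfVal a := by
  induction a with
  | nil => exact le_rfl
  | cons a t ih => exact one_div_nonneg.mpr (by positivity)

lemma iterate_leftMap_one_div (k : ℕ) {s : ℚ} (hs : 0 < s) :
    leftMap^[k] (1 / s) = 1 / (s + k) := by
  induction k with
  | zero => simp
  | succ k ih =>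
    rw [Function.iterate_succ_apply', ih, leftMap_div zero_le_one (by positivity)]
    push_cast
    ring_nf

lemma cfVal_cons_eq_iterate_leftMap {a : ℕ} (ha : 1 ≤ a) (t : List ℕ) :
    cfVal (a :: t) = leftMap^[a - 1] (1 - leftMap (cfVal t)) := by
  have ht := cfVal_nonneg t
  have h1 : 1 - leftMap (cfVal t) = 1 / (1 + cfVal t) := by
    unfold leftMap
    field_simp
    ring
  rw [h1, iterate_leftMap_one_div _ (by positivity), cfVal]
  congr 1
  push_cast [ha]
  ring

lemma iterate_leftMap_mem_sternBrocot (k : ℕ) {n : ℕ} {z : ℚ} (hz : z ∈ sternBrocot n) :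
    leftMap^[k] z ∈ sternBrocot (n + k) := by
  induction k with
  | zero => exact hz
  | succ k ih =>
    rw [Function.iterate_succ_apply']
    exact leftMap_mem_sternBrocot ih

lemma exists_cfVal_mem_sternBrocot {a : List ℕ} (ha : ∀ ai ∈ a, 1 ≤ ai) :
    ∃ n, cfVal a ∈ sternBrocot n := by
  induction a with
  | nil => exact ⟨0, zero_mem_sternBrocot 0⟩
  | cons a t ih =>
    obtain ⟨n, hn⟩ := ih fun x hx => ha x (List.mem_cons_of_mem a hx)
    rw [cfVal_cons_eq_iterate_leftMap (ha a List.mem_cons_self)]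
    exact ⟨_, iterate_leftMap_mem_sternBrocot _
      (one_sub_mem_sternBrocot (leftMap_mem_sternBrocot hn))⟩

/-- `∑ a_i` over the indices `i ≤ j` with `i % 2 = r`. Lists are indexed from `0`, so the
paper's odd-indexed partial quotients are those with `r = 0`. -/
def paritySum (a : List ℕ) (r j : ℕ) : ℕ :=
  ∑ i ∈ (Finset.range (j + 1)).filter (fun i => i % 2 = r), a.getD i 0

lemma paritySum_cons_zero (a₀ : ℕ) (t : List ℕ) (j : ℕ) :
    paritySum (a₀ :: t) 0 (j + 1) = a₀ + paritySum t 1 j := by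
  simp only [paritySum, Finset.sum_filter]
  rw [Finset.sum_range_succ']
  simp [Nat.succ_mod_two_eq_zero_iff, add_comm]

lemma paritySum_cons_one (a₀ : ℕ) (t : List ℕ) (j : ℕ) :
    paritySum (a₀ :: t) 1 (j + 1) = paritySum t 0 j := by
  simp only [paritySum, Finset.sum_filter]
  rw [Finset.sum_range_succ']
  simp [Nat.succ_mod_two_eq_one_iff]

lemma one_le_paritySum_zero {a₀ : ℕ} (h : 1 ≤ a₀) (t : List ℕ) (j : ℕ) :
    1 ≤ paritySum (a₀ :: t) 0 j := by
  have h0 : 0 ∈ (Finset.range (j + 1)).filter (fun i => i % 2 = 0) := by simp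
  exact h.trans (Finset.single_le_sum (f := fun i => (a₀ :: t).getD i 0)
    (fun _ _ => Nat.zero_le _) h0)

noncomputable def salemSum (lam : ℝ) (a : List ℕ) : ℝ :=
  ∑ j ∈ Finset.range a.length,
    (-1 : ℝ) ^ j * lam ^ (paritySum a 0 j - 1) * (1 - lam) ^ paritySum a 1 j

lemma salemSum_nil (lam : ℝ) : salemSum lam [] = 0 := by
  simp [salemSum]

lemma salemSum_cons (lam : ℝ) {a₀ : ℕ} (h : 1 ≤ a₀) {t : List ℕ}
    (ht : ∀ ai ∈ t, 1 ≤ ai) :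
    salemSum lam (a₀ :: t) = lam ^ (a₀ - 1) * (1 - (1 - lam) * salemSum (1 - lam) t) := by
  have hterm : ∀ j ∈ Finset.range t.length,
      (-1 : ℝ) ^ (j + 1) * lam ^ (paritySum (a₀ :: t) 0 (j + 1) - 1) *
          (1 - lam) ^ paritySum (a₀ :: t) 1 (j + 1) =
        lam ^ (a₀ - 1) * (-(1 - lam)) * ((-1 : ℝ) ^ j * (1 - lam) ^ (paritySum t 0 j - 1) *
          (1 - (1 - lam)) ^ paritySum t 1 j) := by
    intro j hj
    obtain ⟨b, t, rfl⟩ :=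
      List.exists_cons_of_length_pos (Nat.zero_lt_of_lt (Finset.mem_range.mp hj))
    obtain ⟨e, he⟩ :=
      Nat.exists_eq_add_of_le' (one_le_paritySum_zero (ht b List.mem_cons_self) t j)
    rw [paritySum_cons_zero, paritySum_cons_one, sub_sub_cancel, he,
      show a₀ + paritySum (b :: t) 1 j - 1 = (a₀ - 1) + paritySum (b :: t) 1 j by omega]
    simp only [Nat.add_sub_cancel, pow_add, pow_succ]
    ring
  rw [salemSum, List.length_cons, Finset.sum_range_succ', Finset.sum_congr rfl hterm,
    ← Finset.mul_sum, salemSum]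
  have h0 : paritySum (a₀ :: t) 0 0 = a₀ := by simp [paritySum, Finset.filter_singleton]
  have h1 : paritySum (a₀ :: t) 1 0 = 0 := by simp [paritySum]
  rw [h0, h1]
  ring

structure IsTichyUitz (lam : ℝ) (g : ℚ → ℝ) : Prop where
  map_zero : g 0 = 0
  map_one : g 1 = 1
  map_mediant : ∀ n : ℕ, ∀ x y : ℚ, IsConsecutive (sternBrocot n) x y →
    g (mediant x y) = g x + lam * (g y - g x)

namespace IsTichyUitz

variable {lam : ℝ} {g : ℚ → ℝ}

lemma map_leftMap (hg : IsTichyUitz lam g) {n : ℕ} {z : ℚ} (hz : z ∈ sternBrocot n) :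
    g (leftMap z) = lam * g z := by
  induction n generalizing z with
  | zero =>
    rcases hz with rfl | rfl
    · simp [leftMap, hg.map_zero]
    · have h := hg.map_mediant 0 0 1 isConsecutive_zero_one
      rw [mediant_zero_one, hg.map_zero, hg.map_one] at h
      rw [show leftMap 1 = 1 / 2 by norm_num [leftMap], h, hg.map_one]
      ring
  | succ n ih =>
    rcases hz with hz | ⟨x, y, hxy, rfl⟩
    · exact ih hz
    · rw [← mediant_leftMap (sternBrocot_subset_Icc n hxy.1).1
          (sternBrocot_subset_Icc n hxy.2.1).1,
        hg.map_mediant _ _ _ hxy.leftMap, ih hxy.1, ih hxy.2.1, hg.map_mediant n x y hxy]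
      ring

lemma map_iterate_leftMap (hg : IsTichyUitz lam g) (k : ℕ) {n : ℕ} {z : ℚ}
    (hz : z ∈ sternBrocot n) : g (leftMap^[k] z) = lam ^ k * g z := by
  induction k with
  | zero => simp
  | succ k ih =>
    rw [Function.iterate_succ_apply', hg.map_leftMap (iterate_leftMap_mem_sternBrocot k hz), ih,
      pow_succ]
    ring

lemma dual (hg : IsTichyUitz lam g) : IsTichyUitz (1 - lam) (fun w => 1 - g (1 - w)) where
  map_zero := by simp [hg.map_one]
  map_one := by simp [hg.map_zero]
  map_mediant n x y hxy := by
    rw [← mediant_one_sub, hg.map_mediant n _ _ hxy.one_sub]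
    ring

lemma map_cfVal_cons (hg : IsTichyUitz lam g) {a : ℕ} (ha : 1 ≤ a) {t : List ℕ}
    (ht : ∀ ai ∈ t, 1 ≤ ai) :
    g (cfVal (a :: t)) = lam ^ (a - 1) * (1 - (1 - lam) * (1 - g (1 - cfVal t))) := by
  obtain ⟨n, hn⟩ := exists_cfVal_mem_sternBrocot ht
  have hdual := hg.dual.map_leftMap hn
  rw [cfVal_cons_eq_iterate_leftMap ha, hg.map_iterate_leftMap _
    (one_sub_mem_sternBrocot (leftMap_mem_sternBrocot hn)), ← hdual]
  ring

lemma map_cfVal (hg : IsTichyUitz lam g) {a : List ℕ} (ha : ∀ ai ∈ a, 1 ≤ ai) :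
    g (cfVal a) = salemSum lam a := by
  induction a generalizing lam g with
  | nil => rw [salemSum_nil, ← hg.map_zero]; rfl
  | cons a₀ t ih =>
    have ha₀ := ha a₀ List.mem_cons_self
    have ht : ∀ ai ∈ t, 1 ≤ ai := fun ai hai => ha ai (List.mem_cons_of_mem a₀ hai)
    rw [hg.map_cfVal_cons ha₀ ht, salemSum_cons lam ha₀ ht, ← ih hg.dual ht]

end IsTichyUitz

theorem tichyUitz_salem_formula_rational_general
    (lam : ℝ)
    (g : ℚ → ℝ)
    (hg0 : g 0 = 0) (hg1 : g 1 = 1)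
    (hrec : ∀ n : ℕ, ∀ x y : ℚ, IsConsecutive (sternBrocot n) x y →
      g (mediant x y) = g x + lam * (g y - g x))
    (x : ℚ)
    (a : List ℕ) (ha : IsCF x a) :
    g x = ∑ j ∈ Finset.range a.length,
        (-1 : ℝ) ^ j *
          lam ^ ((∑ i ∈ (Finset.range (j + 1)).filter (fun i => i % 2 = 0),
                    a.getD i 0) - 1) *
          (1 - lam) ^ (∑ i ∈ (Finset.range (j + 1)).filter (fun i => i % 2 = 1),
                    a.getD i 0)
      ∧ ∀ a₁ : ℕ, 2 ≤ a₁ → g (1 / (a₁ : ℚ)) = lam ^ (a₁ - 1) := by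
  have hg : IsTichyUitz lam g := ⟨hg0, hg1, hrec⟩
  refine ⟨by rw [ha.2.2, hg.map_cfVal ha.1]; rfl, fun a₁ h₁ => ?_⟩
  have hsingle : ∀ ai ∈ [a₁], 1 ≤ ai := by simp; omega
  calc g (1 / (a₁ : ℚ)) = g (cfVal [a₁]) := by simp [cfVal]
    _ = salemSum lam [a₁] := hg.map_cfVal hsingle
    _ = lam ^ (a₁ - 1) := by
      simp [salemSum_cons lam (by omega : 1 ≤ a₁) (t := []) (by simp), salemSum_nil]

/-- Salem-type formula for `g_λ` at rationals, together with the
particular case `g_λ(1/a₁) = λ^(a₁ - 1)`. -/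
theorem tichyUitz_salem_formula_rational
    (lam : ℝ) (hlam : lam ∈ Set.Ioo (0 : ℝ) 1)
    (g : ℚ → ℝ)
    (hg0 : g 0 = 0) (hg1 : g 1 = 1)
    (hrec : ∀ n : ℕ, ∀ x y : ℚ, IsConsecutive (sternBrocot n) x y →
      g (mediant x y) = g x + lam * (g y - g x))
    (x : ℚ) (hx : x ∈ Set.Ioo (0 : ℚ) 1)
    (a : List ℕ) (ha : IsCF x a) :
    g x = ∑ j ∈ Finset.range a.length,
        (-1 : ℝ) ^ j *
          lam ^ ((∑ i ∈ (Finset.range (j + 1)).filter (fun i => i % 2 = 0),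
                    a.getD i 0) - 1) *
          (1 - lam) ^ (∑ i ∈ (Finset.range (j + 1)).filter (fun i => i % 2 = 1),
                    a.getD i 0)
      ∧ ∀ a₁ : ℕ, 2 ≤ a₁ → g (1 / (a₁ : ℚ)) = lam ^ (a₁ - 1) :=
  tichyUitz_salem_formula_rational_general lam g hg0 hg1 hrec x a ha
end

section
/- Let λ ∈ (0,1) and let x ∈ (0,1) be irrational with regular continued fraction expansion x = [0; a_1, a_2, …] (an infinite sequence of positive integers). Then the series Σ_{j≥1} (−1)^{j+1} · λ^{(Σ_{1≤i≤j, i odd} a_i) − 1} · (1−λ)^{Σ_{1≤i≤j, i even} a_i} converges and its sum equals g_λ(x). -/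
open Set Filter

/-!
The convergents `p_m/q_m` of `x` and the intermediate fractions
`(p_{m-1} + k p_m)/(q_{m-1} + k q_m)`, `0 ≤ k ≤ a_{m+1}`, trace the path to `x` in the
Stern–Brocot tree: each intermediate fraction is the mediant of its predecessor and `p_m/q_m`,
and forms with `p_m/q_m` a pair of consecutive elements of some `ℱ_n`, with `p_m/q_m` on the
left for even `m` and on the right for odd `m`. Along such a block the defining recursion
multiplies `g(·) - g(p_m/q_m)` by `λ` (even `m`) or `1 - λ` (odd `m`) at each step, so the
increments `g(p_{m+1}/q_{m+1}) - g(p_m/q_m)` are exactly the terms of the series. Its partial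
sums are therefore `g(p_m/q_m)`, which tend to `g(x)` by continuity.
-/

lemma div_lt_add_div_add {K : Type*} [Field K] [LinearOrder K] [IsStrictOrderedRing K]
    {a b c d : K} (hb : 0 < b) (hd : 0 < d) (h : a / b < c / d) :
    a / b < (a + c) / (b + d) ∧ (a + c) / (b + d) < c / d := by
  rw [div_lt_div_iff₀ hb hd] at h
  constructor <;> rw [div_lt_div_iff₀ (by positivity) (by positivity)] <;> linarith

lemma mediant_comm (x y : ℚ) : mediant x y = mediant y x := by
  simp only [mediant, add_comm]

lemma num_den_natCast_div_of_coprime {p q : ℕ} (hq : 0 < q) (h : p.Coprime q) :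
    ((p / q : ℚ)).num = p ∧ ((p / q : ℚ)).den = q := by
  have hq' : (0 : ℤ) < q := by exact_mod_cast hq
  have hnum := Rat.num_div_eq_of_coprime (a := p) hq' (by simpa using h)
  have hden := Rat.den_div_eq_of_coprime (a := p) hq' (by simpa using h)
  push_cast at hnum hden
  exact ⟨hnum, by exact_mod_cast hden⟩

lemma mediant_natCast_div {p q r s : ℕ} (hq : 0 < q) (hs : 0 < s) (hpq : p.Coprime q)
    (hrs : r.Coprime s) :
    mediant (p / q) (r / s) = ((p + r : ℕ) : ℚ) / ((q + s : ℕ) : ℚ) := by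
  obtain ⟨hp, hq⟩ := num_den_natCast_div_of_coprime hq hpq
  obtain ⟨hr, hs⟩ := num_den_natCast_div_of_coprime hs hrs
  rw [mediant, hp, hq, hr, hs]
  push_cast
  rfl

lemma Nat.Coprime.of_mul_sub_mul_eq_neg_one_pow {p q r s n : ℕ}
    (h : (p * s : ℤ) - r * q = (-1) ^ n) : p.Coprime q := by
  rw [← Nat.isCoprime_iff_coprime]
  rcases neg_one_pow_eq_or ℤ n with h1 | h1 <;> rw [h1] at h
  · exact ⟨s, -r, by linear_combination h⟩
  · exact ⟨-s, r, by linear_combination -h⟩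

lemma IsConsecutive.eq_of_mem_Ioo {S : Set ℚ} {x y u v t : ℚ} (hxy : IsConsecutive S x y)
    (huv : IsConsecutive S u v) (ht : t ∈ Ioo x y) (ht' : t ∈ Ioo u v) : u = x ∧ v = y := by
  obtain ⟨hx, hy, -, hxy⟩ := hxy
  obtain ⟨hu, hv, -, huv⟩ := huv
  refine ⟨le_antisymm ?_ ?_, le_antisymm ?_ ?_⟩
  · exact not_lt.1 fun h => hxy u hu ⟨h, ht'.1.trans ht.2⟩
  · exact not_lt.1 fun h => huv x hx ⟨h, ht.1.trans ht'.2⟩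
  · exact not_lt.1 fun h => huv y hy ⟨ht'.1.trans ht.2, h⟩
  · exact not_lt.1 fun h => hxy v hv ⟨ht.1.trans ht'.2, h⟩

lemma eq_mediant_of_mem_sternBrocot_succ {n : ℕ} {x y t : ℚ}
    (hxy : IsConsecutive (sternBrocot n) x y) (ht : t ∈ sternBrocot (n + 1))
    (htxy : t ∈ Ioo x y) : t = mediant x y := by
  rcases ht with ht | ⟨u, v, huv, rfl⟩
  · exact absurd htxy (hxy.2.2.2 t ht)
  · obtain ⟨rfl, rfl⟩ := hxy.eq_of_mem_Ioo huv htxy (mediant_mem_Ioo huv.2.2.1)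
    rfl

lemma IsConsecutive.mediant_left {n : ℕ} {x y : ℚ} (h : IsConsecutive (sternBrocot n) x y) :
    IsConsecutive (sternBrocot (n + 1)) x (mediant x y) := by
  have hm := mediant_mem_Ioo h.2.2.1
  refine ⟨Or.inl h.1, Or.inr ⟨x, y, h, rfl⟩, hm.1, fun t ht hxt => hxt.2.ne ?_⟩
  exact eq_mediant_of_mem_sternBrocot_succ h ht ⟨hxt.1, hxt.2.trans hm.2⟩

lemma IsConsecutive.mediant_right {n : ℕ} {x y : ℚ} (h : IsConsecutive (sternBrocot n) x y) :
    IsConsecutive (sternBrocot (n + 1)) (mediant x y) y := by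
  have hm := mediant_mem_Ioo h.2.2.1
  refine ⟨Or.inr ⟨x, y, h, rfl⟩, Or.inl h.2.1, hm.2, fun t ht hty => hty.1.ne' ?_⟩
  exact eq_mediant_of_mem_sternBrocot_succ h ht ⟨hm.1.trans hty.1, hty.2⟩

def IsSternBrocotPair (x y : ℚ) : Prop :=
  ∃ n, IsConsecutive (sternBrocot n) x y

lemma isSternBrocotPair_zero_one : IsSternBrocotPair 0 1 :=
  ⟨0, Or.inl rfl, Or.inr rfl, one_pos, by rintro z (rfl | rfl) ⟨h0, h1⟩ <;> simp at h0 h1⟩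

lemma IsSternBrocotPair.mediant_left {x y : ℚ} (h : IsSternBrocotPair x y) :
    IsSternBrocotPair x (mediant x y) :=
  let ⟨n, hn⟩ := h; ⟨n + 1, hn.mediant_left⟩

lemma IsSternBrocotPair.mediant_right {x y : ℚ} (h : IsSternBrocotPair x y) :
    IsSternBrocotPair (mediant x y) y :=
  let ⟨n, hn⟩ := h; ⟨n + 1, hn.mediant_right⟩

def MediantRecursion (lam : ℝ) (g : ℝ → ℝ) : Prop :=
  ∀ n : ℕ, ∀ x y : ℚ, IsConsecutive (sternBrocot n) x y →
    g ((mediant x y : ℚ) : ℝ) = g (x : ℝ) + lam * (g (y : ℝ) - g (x : ℝ))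

namespace MediantRecursion

variable {lam : ℝ} {g : ℝ → ℝ} {x y : ℚ}

lemma sub_left (hg : MediantRecursion lam g) (h : IsSternBrocotPair x y) :
    g (mediant x y) - g x = lam * (g y - g x) := by
  obtain ⟨n, h⟩ := h
  rw [hg n x y h]
  ring

lemma sub_right (hg : MediantRecursion lam g) (h : IsSternBrocotPair x y) :
    g (mediant x y) - g y = (1 - lam) * (g x - g y) := by
  obtain ⟨n, h⟩ := h
  rw [hg n x y h]
  ring

end MediantRecursion

/-- `cfNum a (m + 1) / cfDen a (m + 1)` is the convergent `[0; a 0, …, a (m - 1)]`;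
index `0` holds the formal convergent `1/0`. -/
def cfNum (a : ℕ → ℕ) : ℕ → ℕ
  | 0 => 1
  | 1 => 0
  | n + 2 => a n * cfNum a (n + 1) + cfNum a n

def cfDen (a : ℕ → ℕ) : ℕ → ℕ
  | 0 => 0
  | 1 => 1
  | n + 2 => a n * cfDen a (n + 1) + cfDen a n

def cfConvergent (a : ℕ → ℕ) (m : ℕ) : ℚ :=
  (cfNum a (m + 1) : ℚ) / cfDen a (m + 1)

def cfIntermediate (a : ℕ → ℕ) (m k : ℕ) : ℚ :=
  ((cfNum a m + k * cfNum a (m + 1) : ℕ) : ℚ) / ((cfDen a m + k * cfDen a (m + 1) : ℕ) : ℚ)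

section ContinuedFraction

variable {a : ℕ → ℕ}

lemma cfNum_add_two (a : ℕ → ℕ) (n : ℕ) :
    cfNum a (n + 2) = a n * cfNum a (n + 1) + cfNum a n := rfl

lemma cfDen_add_two (a : ℕ → ℕ) (n : ℕ) :
    cfDen a (n + 2) = a n * cfDen a (n + 1) + cfDen a n := rfl

lemma cfDen_succ_pos (ha : ∀ i, 1 ≤ a i) : ∀ n, 0 < cfDen a (n + 1)
  | 0 => Nat.one_pos
  | n + 1 => by
    rw [cfDen_add_two]
    exact Nat.lt_of_lt_of_le (Nat.mul_pos (ha n) (cfDen_succ_pos ha n)) (Nat.le_add_right _ _)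

lemma cfNum_mul_cfDen_sub (a : ℕ → ℕ) :
    ∀ n, (cfNum a (n + 1) * cfDen a n : ℤ) - cfNum a n * cfDen a (n + 1) = (-1) ^ (n + 1)
  | 0 => by simp [cfNum, cfDen]
  | n + 1 => by
    rw [cfNum_add_two, cfDen_add_two, pow_succ]
    push_cast
    linear_combination (-1 : ℤ) * cfNum_mul_cfDen_sub a n

lemma cfNum_succ_eq_cfDen_tail (a : ℕ → ℕ) :
    ∀ n, cfNum a (n + 1) = cfDen (fun i => a (i + 1)) n
  | 0 => rfl
  | 1 => rfl
  | n + 2 => by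
    rw [cfNum_add_two, cfDen_add_two, cfNum_succ_eq_cfDen_tail a (n + 1),
      cfNum_succ_eq_cfDen_tail a n]

lemma cfDen_succ_eq_tail (a : ℕ → ℕ) :
    ∀ n, cfDen a (n + 1) = a 0 * cfDen (fun i => a (i + 1)) n + cfNum (fun i => a (i + 1)) n
  | 0 => rfl
  | 1 => by simp [cfDen, cfNum]
  | n + 2 => by
    rw [cfDen_add_two a (n + 1), cfDen_succ_eq_tail a (n + 1), cfDen_succ_eq_tail a n,
      cfDen_add_two _ n, cfNum_add_two _ n]
    ring

lemma cfVal_ofFn (ha : ∀ i, 1 ≤ a i) (m : ℕ) :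
    cfVal (List.ofFn fun i : Fin m => a i) = cfConvergent a m := by
  induction m generalizing a with
  | zero => simp [cfVal, cfConvergent, cfNum, cfDen]
  | succ m ih =>
    have hD : (0 : ℚ) < cfDen (fun i => a (i + 1)) (m + 1) := by
      exact_mod_cast cfDen_succ_pos (fun i => ha (i + 1)) m
    rw [List.ofFn_succ, cfVal]
    simp only [Fin.val_zero, Fin.val_succ]
    rw [ih fun i => ha (i + 1), cfConvergent, cfConvergent, cfNum_succ_eq_cfDen_tail a (m + 1),
      cfDen_succ_eq_tail a (m + 1)]
    push_cast
    field_simp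

lemma cfVal_mem_Icc : ∀ l : List ℕ, (∀ b ∈ l, 1 ≤ b) → cfVal l ∈ Icc (0 : ℚ) 1
  | [], _ => by simp [cfVal]
  | b :: l, h => by
    have hl := (cfVal_mem_Icc l fun c hc => h c (List.mem_cons_of_mem b hc)).1
    have hb : (1 : ℚ) ≤ b := by exact_mod_cast h b List.mem_cons_self
    rw [cfVal]
    exact ⟨by positivity, (div_le_one (by positivity)).2 (by linarith)⟩

lemma cfConvergent_zero : cfConvergent a 0 = 0 := by
  simp [cfConvergent, cfNum]

lemma cfIntermediate_zero_one : cfIntermediate a 0 1 = 1 := by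
  simp [cfIntermediate, cfNum, cfDen]

lemma cfIntermediate_succ_zero (m : ℕ) : cfIntermediate a (m + 1) 0 = cfConvergent a m := by
  simp [cfIntermediate, cfConvergent]

lemma cfIntermediate_self (m : ℕ) : cfIntermediate a m (a m) = cfConvergent a (m + 1) := by
  rw [cfIntermediate, cfConvergent, cfNum_add_two, cfDen_add_two]
  congr 2 <;> ring

lemma cfIntermediate_den_pos (ha : ∀ i, 1 ≤ a i) {m k : ℕ} (hmk : 0 < m + k) :
    0 < cfDen a m + k * cfDen a (m + 1) := by
  rcases m with _ | m
  · simp [cfDen]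
    omega
  · exact Nat.lt_of_lt_of_le (cfDen_succ_pos ha m) (Nat.le_add_right _ _)

lemma mediant_cfConvergent_cfIntermediate (ha : ∀ i, 1 ≤ a i) {m k : ℕ} (hmk : 0 < m + k) :
    mediant (cfConvergent a m) (cfIntermediate a m k) = cfIntermediate a m (k + 1) := by
  have hdet := cfNum_mul_cfDen_sub a m
  have hconv : (cfNum a (m + 1)).Coprime (cfDen a (m + 1)) :=
    .of_mul_sub_mul_eq_neg_one_pow hdet
  have hint : (cfNum a m + k * cfNum a (m + 1)).Coprime (cfDen a m + k * cfDen a (m + 1)) :=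
    .of_mul_sub_mul_eq_neg_one_pow (r := cfNum a (m + 1)) (s := cfDen a (m + 1)) (n := m) <| by
      rw [pow_succ] at hdet
      push_cast
      linear_combination -hdet
  rw [cfConvergent, cfIntermediate, mediant_natCast_div (cfDen_succ_pos ha m)
    (cfIntermediate_den_pos ha hmk) hconv hint, cfIntermediate]
  congr 2 <;> ring

end ContinuedFraction

/-- Step `k` of block `m` of the Stern–Brocot path to `[0; a 0, a 1, …]`. -/
def IsWalkPair (a : ℕ → ℕ) (m k : ℕ) : Prop :=
  if m % 2 = 0 then IsSternBrocotPair (cfConvergent a m) (cfIntermediate a m k)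
  else IsSternBrocotPair (cfIntermediate a m k) (cfConvergent a m)

section Walk

variable {a : ℕ → ℕ}

lemma isWalkPair_zero_one : IsWalkPair a 0 1 := by
  simpa [IsWalkPair, cfConvergent_zero, cfIntermediate_zero_one] using isSternBrocotPair_zero_one

lemma IsWalkPair.succ (ha : ∀ i, 1 ≤ a i) {m k : ℕ} (hmk : 0 < m + k) (h : IsWalkPair a m k) :
    IsWalkPair a m (k + 1) := by
  unfold IsWalkPair at h ⊢
  rw [← mediant_cfConvergent_cfIntermediate ha hmk]
  split_ifs at h ⊢
  · exact h.mediant_left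
  · rw [mediant_comm]
    exact h.mediant_right

lemma IsWalkPair.mono (ha : ∀ i, 1 ≤ a i) {m k k' : ℕ} (hmk : 0 < m + k) (h : IsWalkPair a m k)
    (hk : k ≤ k') : IsWalkPair a m k' := by
  induction k', hk using Nat.le_induction with
  | base => exact h
  | succ k' hkk' ih => exact ih.succ ha (by omega)

lemma IsWalkPair.next_block {m : ℕ} (h : IsWalkPair a m (a m)) : IsWalkPair a (m + 1) 0 := by
  unfold IsWalkPair at h ⊢
  rw [cfIntermediate_self] at h
  rw [cfIntermediate_succ_zero]
  split_ifs at h ⊢ <;> first | exact h | omega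

lemma isWalkPair (ha : ∀ i, 1 ≤ a i) {m k : ℕ} (hmk : 0 < m + k) : IsWalkPair a m k := by
  have hstart : ∀ m, IsWalkPair a (m + 1) 0 := by
    intro m
    induction m with
    | zero => exact (isWalkPair_zero_one.mono ha one_pos (ha 0)).next_block
    | succ m ih => exact (ih.mono ha (by omega) (Nat.zero_le _)).next_block
  rcases m with _ | m
  · exact isWalkPair_zero_one.mono ha one_pos (by omega)
  · exact (hstart m).mono ha (by omega) (Nat.zero_le k)

end Walk

def blockRatio (lam : ℝ) (m : ℕ) : ℝ := if m % 2 = 0 then lam else 1 - lam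

def salemTerm (lam : ℝ) (a : ℕ → ℕ) (j : ℕ) : ℝ :=
  (-1 : ℝ) ^ j *
    lam ^ ((∑ i ∈ (Finset.range (j + 1)).filter (fun i => i % 2 = 0), a i) - 1) *
    (1 - lam) ^ (∑ i ∈ (Finset.range (j + 1)).filter (fun i => i % 2 = 1), a i)

lemma salemTerm_zero (lam : ℝ) (a : ℕ → ℕ) : salemTerm lam a 0 = lam ^ (a 0 - 1) := by
  simp [salemTerm, Finset.filter_singleton]

lemma salemTerm_succ (lam : ℝ) {a : ℕ → ℕ} (ha : 1 ≤ a 0) (j : ℕ) :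
    salemTerm lam a (j + 1) = -blockRatio lam (j + 1) ^ a (j + 1) * salemTerm lam a j := by
  have hA : 1 ≤ ∑ i ∈ (Finset.range (j + 1)).filter (fun i => i % 2 = 0), a i :=
    ha.trans (Finset.single_le_sum (fun _ _ => Nat.zero_le _) (by simp))
  simp only [salemTerm, blockRatio, Finset.range_add_one (n := j + 1), Finset.filter_insert]
  rcases Nat.mod_two_eq_zero_or_one (j + 1) with h | h
  · rw [if_pos h, if_neg (by omega), if_pos h, Finset.sum_insert (by simp),
      Nat.add_sub_assoc hA, pow_add, pow_succ]
    ring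
  · rw [if_neg (by omega), if_pos h, if_neg (by omega), Finset.sum_insert (by simp), pow_add,
      pow_succ]
    ring

namespace MediantRecursion

variable {lam : ℝ} {g : ℝ → ℝ} {a : ℕ → ℕ}

lemma cfIntermediate_succ_sub (hg : MediantRecursion lam g) (ha : ∀ i, 1 ≤ a i) {m k : ℕ}
    (hmk : 0 < m + k) :
    g (cfIntermediate a m (k + 1)) - g (cfConvergent a m)
      = blockRatio lam m * (g (cfIntermediate a m k) - g (cfConvergent a m)) := by
  have h := isWalkPair ha hmk
  rw [← mediant_cfConvergent_cfIntermediate ha hmk, blockRatio]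
  unfold IsWalkPair at h
  split_ifs at h ⊢
  · exact hg.sub_left h
  · rw [mediant_comm]
    exact hg.sub_right h

lemma cfIntermediate_add_sub (hg : MediantRecursion lam g) (ha : ∀ i, 1 ≤ a i) {m k : ℕ}
    (hmk : 0 < m + k) : ∀ j,
    g (cfIntermediate a m (k + j)) - g (cfConvergent a m)
      = blockRatio lam m ^ j * (g (cfIntermediate a m k) - g (cfConvergent a m))
  | 0 => by simp
  | j + 1 => by
    rw [← add_assoc, hg.cfIntermediate_succ_sub ha (by omega),
      hg.cfIntermediate_add_sub ha hmk j, pow_succ]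
    ring

lemma cfConvergent_one (hg : MediantRecursion lam g) (ha : ∀ i, 1 ≤ a i) (hg0 : g 0 = 0)
    (hg1 : g 1 = 1) : g (cfConvergent a 1) = lam ^ (a 0 - 1) := by
  have h := hg.cfIntermediate_add_sub ha (m := 0) (k := 1) one_pos (a 0 - 1)
  rw [Nat.add_sub_cancel' (ha 0), cfIntermediate_self, cfIntermediate_zero_one,
    cfConvergent_zero] at h
  simpa [blockRatio, hg0, hg1] using h

lemma cfConvergent_add_two_sub (hg : MediantRecursion lam g) (ha : ∀ i, 1 ≤ a i) (m : ℕ) :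
    g (cfConvergent a (m + 2)) - g (cfConvergent a (m + 1))
      = -blockRatio lam (m + 1) ^ a (m + 1)
          * (g (cfConvergent a (m + 1)) - g (cfConvergent a m)) := by
  have h := hg.cfIntermediate_add_sub ha (m := m + 1) (k := 0) (by omega) (a (m + 1))
  rw [zero_add, cfIntermediate_self, cfIntermediate_succ_zero] at h
  rw [h]
  ring

lemma cfConvergent_succ_sub (hg : MediantRecursion lam g) (ha : ∀ i, 1 ≤ a i) (hg0 : g 0 = 0)
    (hg1 : g 1 = 1) : ∀ m, g (cfConvergent a (m + 1)) - g (cfConvergent a m) = salemTerm lam a m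
  | 0 => by simp [hg.cfConvergent_one ha hg0 hg1, cfConvergent_zero, hg0, salemTerm_zero]
  | m + 1 => by
    rw [hg.cfConvergent_add_two_sub ha, hg.cfConvergent_succ_sub ha hg0 hg1 m,
      salemTerm_succ lam (ha 0)]

lemma cfConvergent_eq_sum (hg : MediantRecursion lam g) (ha : ∀ i, 1 ≤ a i) (hg0 : g 0 = 0)
    (hg1 : g 1 = 1) (m : ℕ) :
    g (cfConvergent a m) = ∑ j ∈ Finset.range m, salemTerm lam a j := by
  rw [← Finset.sum_congr rfl fun j _ => hg.cfConvergent_succ_sub ha hg0 hg1 j,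
    Finset.sum_range_sub (fun j => g (cfConvergent a j)), cfConvergent_zero]
  simp [hg0]

end MediantRecursion

theorem tichyUitz_salem_formula_irrational_general
    (lam : ℝ)
    (g : ℝ → ℝ)
    (hg0 : g 0 = 0) (hg1 : g 1 = 1)
    (hgc : ContinuousOn g (Set.Icc (0 : ℝ) 1))
    (hrec : ∀ n : ℕ, ∀ x y : ℚ, IsConsecutive (sternBrocot n) x y →
      g ((mediant x y : ℚ) : ℝ) = g (x : ℝ) + lam * (g (y : ℝ) - g (x : ℝ)))
    (x : ℝ) (hx : x ∈ Set.Ioo (0 : ℝ) 1)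
    (a : ℕ → ℕ) (ha : ∀ i, 1 ≤ a i)
    (hcf : Filter.Tendsto
      (fun m : ℕ => ((cfVal (List.ofFn (fun i : Fin m => a i)) : ℚ) : ℝ))
      Filter.atTop (nhds x)) :
    Filter.Tendsto
      (fun m : ℕ => ∑ j ∈ Finset.range m,
        (-1 : ℝ) ^ j *
          lam ^ ((∑ i ∈ (Finset.range (j + 1)).filter (fun i => i % 2 = 0),
                    a i) - 1) *
          (1 - lam) ^ (∑ i ∈ (Finset.range (j + 1)).filter (fun i => i % 2 = 1),
                    a i))
      Filter.atTop (nhds (g x)) := by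
  have hmem : ∀ m, ((cfVal (List.ofFn fun i : Fin m => a i) : ℚ) : ℝ) ∈ Icc (0 : ℝ) 1 := by
    intro m
    obtain ⟨h0, h1⟩ := cfVal_mem_Icc _ (List.forall_mem_ofFn_iff.2 fun i => ha i)
    exact ⟨by exact_mod_cast h0, by exact_mod_cast h1⟩
  have hlim := (hgc x (Ioo_subset_Icc_self hx)).tendsto.comp
    (tendsto_nhdsWithin_iff.2 ⟨hcf, Eventually.of_forall hmem⟩)
  refine hlim.congr fun m => ?_
  rw [Function.comp_apply, cfVal_ofFn ha, MediantRecursion.cfConvergent_eq_sum hrec ha hg0 hg1]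
  rfl

/-- Salem-type series for `g_λ` at irrational points: the series
converges and its sum is `g_λ(x)`. -/
theorem tichyUitz_salem_formula_irrational
    (lam : ℝ) (hlam : lam ∈ Set.Ioo (0 : ℝ) 1)
    (g : ℝ → ℝ)
    (hg0 : g 0 = 0) (hg1 : g 1 = 1)
    (hgc : ContinuousOn g (Set.Icc (0 : ℝ) 1))
    (hrec : ∀ n : ℕ, ∀ x y : ℚ, IsConsecutive (sternBrocot n) x y →
      g ((mediant x y : ℚ) : ℝ) = g (x : ℝ) + lam * (g (y : ℝ) - g (x : ℝ)))
    (x : ℝ) (hx : x ∈ Set.Ioo (0 : ℝ) 1) (hirr : Irrational x)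
    (a : ℕ → ℕ) (ha : ∀ i, 1 ≤ a i)
    (hcf : Filter.Tendsto
      (fun m : ℕ => ((cfVal (List.ofFn (fun i : Fin m => a i)) : ℚ) : ℝ))
      Filter.atTop (nhds x)) :
    Filter.Tendsto
      (fun m : ℕ => ∑ j ∈ Finset.range m,
        (-1 : ℝ) ^ j *
          lam ^ ((∑ i ∈ (Finset.range (j + 1)).filter (fun i => i % 2 = 0),
                    a i) - 1) *
          (1 - lam) ^ (∑ i ∈ (Finset.range (j + 1)).filter (fun i => i % 2 = 1),
                    a i))
      Filter.atTop (nhds (g x)) :=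
  tichyUitz_salem_formula_irrational_general lam g hg0 hg1 hgc hrec x hx a ha hcf
end

section
/- For every n ≥ 0, a rational number ξ ∈ (0,1) belongs to the Stern–Brocot sequence ℱ_n if and only if S(ξ) ≤ n+1, where S(ξ) is the sum of the partial quotients in the regular continued fraction expansion ξ = [0; a_1, …, a_m] with a_m ≥ 2. -/
/-!
The maps `x ↦ x / (x + 1)` and `x ↦ 1 / (2 - x)` are increasing and commute with mediants of
reduced fractions (on numerator–denominator pairs they act by unimodular matrices, so reduced
pairs stay reduced). Since they send `[0, 1]` onto `[0, 1/2]` and `[1/2, 1]`, this gives the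
self-similarity `ℱ_{n+1} = x/(x+1) '' ℱ_n ∪ 1/(2-x) '' ℱ_n`. On continued fractions the first map
raises `a_1` by one, and `x ↦ 1 - x`, a symmetry of every `ℱ_n`, exchanges `[0; 1, b, …]` and
`[0; b + 1, …]` without changing the sum of the partial quotients; so induction on `n`
finishes the proof.
-/

open Set Filter

namespace SternBrocot

theorem num_den_eq_of_eq_div {x : ℚ} {p q : ℤ} (hq : 0 < q) (hpq : IsCoprime p q)
    (hx : x = p / q) : x.num = p ∧ (x.den : ℤ) = q := by
  have hcop : Nat.Coprime p.natAbs q.natAbs := Int.isCoprime_iff_gcd_eq_one.mp hpq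
  subst hx
  exact ⟨Rat.num_div_eq_of_coprime hq hcop, Rat.den_div_eq_of_coprime hq hcop⟩

theorem isCoprime_num_den (x : ℚ) : IsCoprime x.num x.den :=
  Int.isCoprime_iff_gcd_eq_one.mpr x.reduced

theorem div_lt_add_div_add {α : Type*} [Field α] [LinearOrder α] [IsStrictOrderedRing α]
    {p q r s : α} (hq : 0 < q) (hs : 0 < s) (h : p / q < r / s) :
    p / q < (p + r) / (q + s) ∧ (p + r) / (q + s) < r / s := by
  rw [div_lt_div_iff₀ hq hs] at h
  constructor
  · rw [div_lt_div_iff₀ hq (by positivity)]; linarith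
  · rw [div_lt_div_iff₀ (by positivity) hs]; linarith

theorem mediant_mem_Ioo {x y : ℚ} (h : x < y) : mediant x y ∈ Ioo x y := by
  rw [← Rat.num_div_den x, ← Rat.num_div_den y] at h
  have := div_lt_add_div_add (by exact_mod_cast x.pos) (by exact_mod_cast y.pos) h
  rwa [Rat.num_div_den, Rat.num_div_den, ← Int.cast_add, ← Nat.cast_add] at this

def leftHalf (x : ℚ) : ℚ := x / (x + 1)

def rightHalf (x : ℚ) : ℚ := 1 / (2 - x)

@[simp] theorem leftHalf_zero : leftHalf 0 = 0 := by norm_num [leftHalf]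
@[simp] theorem leftHalf_one : leftHalf 1 = 1 / 2 := by norm_num [leftHalf]
@[simp] theorem rightHalf_zero : rightHalf 0 = 1 / 2 := by norm_num [rightHalf]
@[simp] theorem rightHalf_one : rightHalf 1 = 1 := by norm_num [rightHalf]

theorem leftHalf_strictMonoOn : StrictMonoOn leftHalf (Ici 0) := by
  intro u (hu : 0 ≤ u) v (hv : 0 ≤ v) huv
  rw [leftHalf, leftHalf, div_lt_div_iff₀ (by linarith) (by linarith)]
  linarith

theorem rightHalf_strictMonoOn : StrictMonoOn rightHalf (Iic 1) := by
  intro u (hu : u ≤ 1) v (hv : v ≤ 1) huv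
  rw [rightHalf, rightHalf, div_lt_div_iff₀ (by linarith) (by linarith)]
  linarith

theorem mapsTo_leftHalf : MapsTo leftHalf (Icc 0 1) (Icc 0 (1 / 2)) := by
  rintro x ⟨hx0, hx1⟩
  have hx : (0 : ℚ) < x + 1 := by linarith
  exact ⟨div_nonneg hx0 hx.le, by rw [leftHalf, div_le_iff₀ hx]; linarith⟩

theorem mapsTo_rightHalf : MapsTo rightHalf (Icc 0 1) (Icc (1 / 2) 1) := by
  rintro x ⟨hx0, hx1⟩
  have hx : (0 : ℚ) < 2 - x := by linarith
  exact ⟨by rw [rightHalf, le_div_iff₀ hx]; linarith, by rw [rightHalf, div_le_one hx]; linarith⟩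

theorem one_sub_leftHalf {x : ℚ} (hx : x ≠ -1) : 1 - leftHalf x = rightHalf (1 - x) := by
  have : x + 1 ≠ 0 := fun h => hx (eq_neg_of_add_eq_zero_left h)
  rw [leftHalf, rightHalf, show 2 - (1 - x) = x + 1 by ring]
  field_simp
  ring

theorem one_sub_rightHalf {x : ℚ} (hx : x ≠ 2) : 1 - rightHalf x = leftHalf (1 - x) := by
  have : 2 - x ≠ 0 := sub_ne_zero.mpr hx.symm
  rw [leftHalf, rightHalf, show 1 - x + 1 = 2 - x by ring]
  field_simp
  ring

theorem num_den_leftHalf {x : ℚ} (hx : 0 ≤ x) :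
    (leftHalf x).num = x.num ∧ ((leftHalf x).den : ℤ) = x.num + x.den := by
  have hnum : 0 ≤ x.num := Rat.num_nonneg.mpr hx
  have hden : (0 : ℤ) < x.den := by exact_mod_cast x.pos
  refine num_den_eq_of_eq_div (by linarith) ?_ ?_
  · have := (isCoprime_num_den x).add_mul_left_right 1
    rwa [mul_one, add_comm] at this
  · have hq : (x.den : ℚ) ≠ 0 := by positivity
    calc leftHalf x = (x.num / x.den) / (x.num / x.den + 1) := by rw [Rat.num_div_den, leftHalf]
      _ = _ := by push_cast; field_simp

theorem num_den_rightHalf {x : ℚ} (hx : x ≤ 1) :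
    (rightHalf x).num = x.den ∧ ((rightHalf x).den : ℤ) = 2 * x.den - x.num := by
  have hle : x.num ≤ x.den := by
    rw [← Rat.num_div_den x, div_le_one (by exact_mod_cast x.pos)] at hx
    exact_mod_cast hx
  have hden : (0 : ℤ) < x.den := by exact_mod_cast x.pos
  refine num_den_eq_of_eq_div (by linarith) ?_ ?_
  · have := ((isCoprime_num_den x).symm.add_mul_left_right (-2)).neg_right
    rwa [show -(x.num + x.den * -2) = 2 * x.den - x.num by ring] at this
  · have hq : (x.den : ℚ) ≠ 0 := by positivity
    calc rightHalf x = 1 / (2 - x.num / x.den) := by rw [Rat.num_div_den, rightHalf]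
      _ = _ := by push_cast; field_simp

theorem mediant_leftHalf {u v : ℚ} (hu : 0 ≤ u) (hv : 0 ≤ v) :
    mediant (leftHalf u) (leftHalf v) = leftHalf (mediant u v) := by
  obtain ⟨hnu, hdu⟩ := num_den_leftHalf hu
  obtain ⟨hnv, hdv⟩ := num_den_leftHalf hv
  have hdu' : ((leftHalf u).den : ℚ) = u.num + u.den := by exact_mod_cast hdu
  have hdv' : ((leftHalf v).den : ℚ) = v.num + v.den := by exact_mod_cast hdv
  simp only [mediant]
  push_cast
  rw [hnu, hnv, hdu', hdv', leftHalf]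
  field_simp
  ring

theorem mediant_rightHalf {u v : ℚ} (hu : u ≤ 1) (hv : v ≤ 1) :
    mediant (rightHalf u) (rightHalf v) = rightHalf (mediant u v) := by
  obtain ⟨hnu, hdu⟩ := num_den_rightHalf hu
  obtain ⟨hnv, hdv⟩ := num_den_rightHalf hv
  have hdu' : ((rightHalf u).den : ℚ) = 2 * u.den - u.num := by exact_mod_cast hdu
  have hdv' : ((rightHalf v).den : ℚ) = 2 * v.den - v.num := by exact_mod_cast hdv
  simp only [mediant]
  push_cast
  rw [hnu, hnv, hdu', hdv', rightHalf]
  push_cast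
  field_simp
  ring

def mediants (S : Set ℚ) : Set ℚ :=
  {z | ∃ x y : ℚ, IsConsecutive S x y ∧ z = mediant x y}

theorem sternBrocot_succ (n : ℕ) :
    sternBrocot (n + 1) = sternBrocot n ∪ mediants (sternBrocot n) :=
  rfl

theorem isConsecutive_image_iff {φ : ℚ → ℚ} {S : Set ℚ} (hφ : StrictMonoOn φ S) {x y : ℚ} :
    IsConsecutive (φ '' S) x y ↔ ∃ u v, IsConsecutive S u v ∧ φ u = x ∧ φ v = y := by
  constructor
  · rintro ⟨⟨u, hu, rfl⟩, ⟨v, hv, rfl⟩, huv, hbetween⟩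
    refine ⟨u, v, ⟨hu, hv, (hφ.lt_iff_lt hu hv).mp huv, ?_⟩, rfl, rfl⟩
    rintro w hw ⟨huw, hwv⟩
    exact hbetween (φ w) ⟨w, hw, rfl⟩ ⟨hφ hu hw huw, hφ hw hv hwv⟩
  · rintro ⟨u, v, ⟨hu, hv, huv, hbetween⟩, rfl, rfl⟩
    refine ⟨⟨u, hu, rfl⟩, ⟨v, hv, rfl⟩, hφ hu hv huv, ?_⟩
    rintro _ ⟨w, hw, rfl⟩ ⟨huw, hwv⟩
    exact hbetween w hw ⟨(hφ.lt_iff_lt hu hw).mp huw, (hφ.lt_iff_lt hw hv).mp hwv⟩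

theorem mediants_image {φ : ℚ → ℚ} {S : Set ℚ} (hφ : StrictMonoOn φ S)
    (hmed : ∀ u ∈ S, ∀ v ∈ S, mediant (φ u) (φ v) = φ (mediant u v)) :
    mediants (φ '' S) = φ '' mediants S := by
  ext z
  simp only [mediants, isConsecutive_image_iff hφ, mem_image, mem_ofPred_eq]
  constructor
  · rintro ⟨_, _, ⟨u, v, huv, rfl, rfl⟩, rfl⟩
    exact ⟨mediant u v, ⟨u, v, huv, rfl⟩, (hmed u huv.1 v huv.2.1).symm⟩
  · rintro ⟨_, ⟨u, v, huv, rfl⟩, rfl⟩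
    exact ⟨φ u, φ v, ⟨u, v, huv, rfl, rfl⟩, (hmed u huv.1 v huv.2.1).symm⟩

theorem isConsecutive_union_iff {A B : Set ℚ} {c : ℚ} (hA : A ⊆ Iic c) (hB : B ⊆ Ici c)
    (hcA : c ∈ A) (hcB : c ∈ B) {x y : ℚ} :
    IsConsecutive (A ∪ B) x y ↔ IsConsecutive A x y ∨ IsConsecutive B x y := by
  constructor
  · rintro ⟨hx, hy, hxy, hbetween⟩
    rcases le_or_gt y c with hyc | hcy
    · have hyA : y ∈ A := hy.elim id fun hyB => le_antisymm hyc (hB hyB) ▸ hcA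
      have hxA : x ∈ A := hx.resolve_right fun hxB => (hxy.trans_le hyc).not_ge (hB hxB)
      exact Or.inl ⟨hxA, hyA, hxy, fun z hz => hbetween z (Or.inl hz)⟩
    · have hcx : c ≤ x := not_lt.mp fun hxc => hbetween c (Or.inl hcA) ⟨hxc, hcy⟩
      have hxB : x ∈ B := hx.elim (fun hxA => le_antisymm (hA hxA) hcx ▸ hcB) id
      have hyB : y ∈ B := hy.resolve_left fun hyA => hcy.not_ge (hA hyA)
      exact Or.inr ⟨hxB, hyB, hxy, fun z hz => hbetween z (Or.inr hz)⟩
  · rintro (⟨hx, hy, hxy, hbetween⟩ | ⟨hx, hy, hxy, hbetween⟩)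
    · refine ⟨Or.inl hx, Or.inl hy, hxy, ?_⟩
      rintro z (hz | hz) ⟨hxz, hzy⟩
      · exact hbetween z hz ⟨hxz, hzy⟩
      · exact (hzy.trans_le (hA hy)).not_ge (hB hz)
    · refine ⟨Or.inr hx, Or.inr hy, hxy, ?_⟩
      rintro z (hz | hz) ⟨hxz, hzy⟩
      · exact (hxz.trans_le' (hB hx)).not_ge (hA hz)
      · exact hbetween z hz ⟨hxz, hzy⟩

theorem mediants_union {A B : Set ℚ} {c : ℚ} (hA : A ⊆ Iic c) (hB : B ⊆ Ici c)
    (hcA : c ∈ A) (hcB : c ∈ B) : mediants (A ∪ B) = mediants A ∪ mediants B := by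
  ext z
  simp only [mediants, isConsecutive_union_iff hA hB hcA hcB, mem_union, mem_ofPred_eq,
    or_and_right, exists_or]

theorem sternBrocot_monotone : Monotone sternBrocot :=
  monotone_nat_of_le_succ fun _ => subset_union_left

theorem zero_mem_sternBrocot (n : ℕ) : (0 : ℚ) ∈ sternBrocot n :=
  sternBrocot_monotone n.zero_le (Or.inl rfl)

theorem one_mem_sternBrocot (n : ℕ) : (1 : ℚ) ∈ sternBrocot n :=
  sternBrocot_monotone n.zero_le (Or.inr rfl)

theorem sternBrocot_subset_Icc (n : ℕ) : sternBrocot n ⊆ Icc 0 1 := by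
  induction n with
  | zero => rintro x (rfl | rfl) <;> norm_num
  | succ n ih =>
    rintro z (hz | ⟨x, y, ⟨hx, hy, hxy, -⟩, rfl⟩)
    · exact ih hz
    · exact Icc_subset_Icc (ih hx).1 (ih hy).2 (Ioo_subset_Icc_self (mediant_mem_Ioo hxy))

theorem mediants_zero_one : mediants {0, 1} = {1 / 2} := by
  have hcons : ∀ x y : ℚ, IsConsecutive {0, 1} x y ↔ x = 0 ∧ y = 1 := by
    intro x y
    constructor
    · rintro ⟨hx | hx, hy | hy, hxy, -⟩ <;> subst hx hy <;>
        first | exact ⟨rfl, rfl⟩ | norm_num at hxy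
    · rintro ⟨rfl, rfl⟩
      refine ⟨Or.inl rfl, Or.inr rfl, zero_lt_one, ?_⟩
      rintro z (rfl | rfl) ⟨h0, h1⟩ <;> simp at h0 h1
  ext z
  simp [mediants, hcons, mediant, one_add_one_eq_two]

theorem sternBrocot_succ_eq_image_union (n : ℕ) :
    sternBrocot (n + 1) = leftHalf '' sternBrocot n ∪ rightHalf '' sternBrocot n := by
  induction n with
  | zero =>
    rw [sternBrocot_succ, sternBrocot, mediants_zero_one, image_pair, image_pair]
    simp only [leftHalf_zero, leftHalf_one, rightHalf_zero, rightHalf_one]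
    ext z; simp only [mem_union, mem_insert_iff, mem_singleton_iff]; tauto
  | succ n ih =>
    have hS := sternBrocot_subset_Icc n
    have hf : StrictMonoOn leftHalf (sternBrocot n) :=
      leftHalf_strictMonoOn.mono fun x hx => (hS hx).1
    have hg : StrictMonoOn rightHalf (sternBrocot n) :=
      rightHalf_strictMonoOn.mono fun x hx => (hS hx).2
    have hmed :
        mediants (sternBrocot (n + 1)) =
          leftHalf '' mediants (sternBrocot n) ∪ rightHalf '' mediants (sternBrocot n) := by
      rw [ih, mediants_union (c := 1 / 2), mediants_image hf, mediants_image hg]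
      · exact fun u hu v hv => mediant_rightHalf (hS hu).2 (hS hv).2
      · exact fun u hu v hv => mediant_leftHalf (hS hu).1 (hS hv).1
      · exact ((mapsTo_leftHalf.mono_left hS).image_subset).trans Icc_subset_Iic_self
      · exact ((mapsTo_rightHalf.mono_left hS).image_subset).trans Icc_subset_Ici_self
      · exact ⟨1, one_mem_sternBrocot n, leftHalf_one⟩
      · exact ⟨0, zero_mem_sternBrocot n, rightHalf_zero⟩
    rw [sternBrocot_succ (n + 1), hmed]
    conv_rhs => rw [sternBrocot_succ n]
    rw [ih, image_union, image_union, union_union_union_comm]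

theorem one_sub_mem_sternBrocot {n : ℕ} {x : ℚ} (hx : x ∈ sternBrocot n) :
    1 - x ∈ sternBrocot n := by
  induction n generalizing x with
  | zero => rcases hx with rfl | rfl <;> norm_num [sternBrocot]
  | succ n ih =>
    rw [sternBrocot_succ_eq_image_union] at hx ⊢
    rcases hx with ⟨u, hu, rfl⟩ | ⟨u, hu, rfl⟩
    · have hu0 := (sternBrocot_subset_Icc n hu).1
      exact Or.inr ⟨1 - u, ih hu, (one_sub_leftHalf (by linarith)).symm⟩
    · have hu1 := (sternBrocot_subset_Icc n hu).2
      exact Or.inl ⟨1 - u, ih hu, (one_sub_rightHalf (by linarith)).symm⟩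

theorem one_sub_mem_sternBrocot_iff {n : ℕ} {x : ℚ} :
    1 - x ∈ sternBrocot n ↔ x ∈ sternBrocot n :=
  ⟨fun h => sub_sub_cancel 1 x ▸ one_sub_mem_sternBrocot h, one_sub_mem_sternBrocot⟩

theorem leftHalf_mem_sternBrocot_succ_iff {n : ℕ} {x : ℚ} (hx : x ∈ Icc 0 1) :
    leftHalf x ∈ sternBrocot (n + 1) ↔ x ∈ sternBrocot n := by
  have hS := sternBrocot_subset_Icc n
  rw [sternBrocot_succ_eq_image_union]
  refine ⟨?_, fun h => Or.inl ⟨x, h, rfl⟩⟩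
  rintro (⟨u, hu, hux⟩ | ⟨u, hu, hux⟩)
  · rwa [← leftHalf_strictMonoOn.injOn (hS hu).1 hx.1 hux]
  · -- the two halves meet only at `1/2 = leftHalf 1`
    have hhalf : leftHalf x = leftHalf 1 :=
      leftHalf_one ▸ le_antisymm (mapsTo_leftHalf hx).2 (hux ▸ (mapsTo_rightHalf (hS hu)).1)
    rw [leftHalf_strictMonoOn.injOn hx.1 (zero_le_one' ℚ) hhalf]
    exact one_mem_sternBrocot n

theorem cfVal_cons (k : ℕ) (t : List ℕ) : cfVal (k :: t) = 1 / (k + cfVal t) := rfl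

theorem cfVal_nonneg (a : List ℕ) : 0 ≤ cfVal a := by
  induction a with
  | nil => exact le_rfl
  | cons k t ih => rw [cfVal_cons]; positivity

theorem cfVal_le_one {a : List ℕ} (ha : ∀ k ∈ a, 1 ≤ k) : cfVal a ≤ 1 := by
  cases a with
  | nil => exact zero_le_one
  | cons k t =>
    have hk : (1 : ℚ) ≤ k := by exact_mod_cast ha k List.mem_cons_self
    rw [cfVal_cons, div_le_one (by linarith [cfVal_nonneg t])]
    linarith [cfVal_nonneg t]

theorem leftHalf_one_div {y : ℚ} (hy : y ≠ 0) : leftHalf (1 / y) = 1 / (1 + y) := by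
  rw [leftHalf]
  rcases eq_or_ne (1 + y) 0 with h | h
  · rw [show y = -1 by linarith]; norm_num
  · field_simp

theorem cfVal_succ_cons {k : ℕ} (hk : 1 ≤ k) (t : List ℕ) :
    cfVal ((k + 1) :: t) = leftHalf (cfVal (k :: t)) := by
  have hk' : (1 : ℚ) ≤ k := by exact_mod_cast hk
  rw [cfVal_cons, cfVal_cons, leftHalf_one_div (by linarith [cfVal_nonneg t])]
  push_cast; ring

theorem one_sub_cfVal_one_cons (t : List ℕ) : 1 - cfVal (1 :: t) = leftHalf (cfVal t) := by
  have ht := cfVal_nonneg t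
  rw [cfVal_cons, leftHalf]
  field_simp
  push_cast
  ring

theorem cfVal_mem_sternBrocot_iff :
    ∀ (n : ℕ) (a : List ℕ), (∀ k ∈ a, 1 ≤ k) → (cfVal a ∈ sternBrocot n ↔ a.sum ≤ n + 1)
  | n, [], _ => by simp [cfVal, zero_mem_sternBrocot]
  | n, [1], _ => by simp [cfVal, one_mem_sternBrocot]
  | 0, (k + 2) :: t, _ => by
    have ht := cfVal_nonneg t
    have hpos : 0 < cfVal ((k + 2) :: t) := by rw [cfVal_cons]; positivity
    have hlt : cfVal ((k + 2) :: t) < 1 := by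
      rw [cfVal_cons, div_lt_one (by positivity)]; push_cast; linarith
    simp only [sternBrocot, mem_insert_iff, mem_singleton_iff, hpos.ne', hlt.ne, or_self,
      false_iff, not_le, List.sum_cons]
    omega
  | n + 1, (k + 2) :: t, ha => by
    have ha' : ∀ j ∈ (k + 1) :: t, 1 ≤ j := by
      simp only [List.mem_cons, forall_eq_or_imp] at ha ⊢
      exact ⟨by omega, ha.2⟩
    rw [cfVal_succ_cons (by omega),
      leftHalf_mem_sternBrocot_succ_iff ⟨cfVal_nonneg _, cfVal_le_one ha'⟩,
      cfVal_mem_sternBrocot_iff n _ ha', List.sum_cons, List.sum_cons]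
    omega
  | n, 1 :: b :: t, ha => by
    have ha' : ∀ j ∈ (b + 1) :: t, 1 ≤ j := by
      simp only [List.mem_cons, forall_eq_or_imp] at ha ⊢
      exact ⟨by omega, ha.2.2⟩
    have hb : 1 ≤ b := ha b (by simp)
    rw [← one_sub_mem_sternBrocot_iff, one_sub_cfVal_one_cons, ← cfVal_succ_cons hb,
      cfVal_mem_sternBrocot_iff n _ ha']
    simp only [List.sum_cons]
    omega
  | _, 0 :: _, ha => absurd (ha 0 List.mem_cons_self) (by norm_num)
termination_by n a => (n, a.length)

end SternBrocot

theorem mem_sternBrocot_iff_sum_partial_quotients_le_general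
    (n : ℕ) (ξ : ℚ)
    (a : List ℕ) (ha : IsCF ξ a) :
    ξ ∈ sternBrocot n ↔ a.sum ≤ n + 1 := by
  obtain ⟨hpos, -, rfl⟩ := ha
  exact SternBrocot.cfVal_mem_sternBrocot_iff n a hpos

/-- a rational `ξ ∈ (0,1)` belongs to `ℱ_n` iff the sum of its
partial quotients is at most `n + 1`. -/
theorem mem_sternBrocot_iff_sum_partial_quotients_le
    (n : ℕ) (ξ : ℚ) (hξ : ξ ∈ Set.Ioo (0 : ℚ) 1)
    (a : List ℕ) (ha : IsCF ξ a) :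
    ξ ∈ sternBrocot n ↔ a.sum ≤ n + 1 :=
  mem_sternBrocot_iff_sum_partial_quotients_le_general n ξ a ha
end

section
/- Let x ∈ (0,1) be rational with regular continued fraction expansion x = [0; a_1, …, a_m] (a_i positive integers, a_m ≥ 2) and regular reduced continued fraction expansion x = [[1; b_1, …, b_l]]. Then the string (b_1, …, b_l) is obtained from (a_1, …, a_m) by replacing each a_i with odd index i by the string 2,2,…,2 of length a_i − 1 (the empty string if a_i = 1), each a_i with even index i ≠ m by the single entry a_i + 2, and a_m (if m is even) by the single entry a_m + 1. -/
open Set Filter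

/-- The transformation producing the regular reduced continued fraction string
from the regular continued fraction string: an `aᵢ` at an odd (1-based)
position becomes `2,2,…,2` (`aᵢ - 1` twos), an `aᵢ` at an even non-final
position becomes `aᵢ + 2`, and a final even-position `a_m` becomes `a_m + 1`. -/
def cfToRRCF : List ℕ → List ℕ
  | [] => []
  | [a] => List.replicate (a - 1) 2
  | [a, b] => List.replicate (a - 1) 2 ++ [b + 1]
  | a :: b :: t => List.replicate (a - 1) 2 ++ (b + 2) :: cfToRRCF t

/-!
Prepending a `2` to a reduced string acts on its tail value `y = rrTail` by `y ↦ 2 - 1/y`, which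
is translation by `1` in the coordinate `(y - 1)⁻¹`. Hence, by induction on `a`, the tail value `y`
of `cfToRRCF a` satisfies `(y - 1)⁻¹ = 1/x - 1 = (a₁ - 1) + [0; a₂, a₃, …]` for
`x = [0; a₁, a₂, …]`: the `a₁ - 1` leading twos contribute `a₁ - 1`, and the entry `a₂ + 2` in
front of the string of `x' = [0; a₃, …]`, whose tail value is `1/(1 - x')`, has tail value
`a₂ + 1 + x'`. This gives `rrcfVal (cfToRRCF a) = x`, and reduced expansions are unique because
tail values of strings with entries `≥ 2` exceed `1`, so the first entry is the ceiling of the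
tail value.
-/

open List

theorem cfVal_mem_Ioo :
    ∀ a : List ℕ, (∀ x ∈ a, 1 ≤ x) → 2 ≤ a.getLastD 0 → cfVal a ∈ Ioo 0 1
  | [], _, hl => by simp at hl
  | [c], _, hl => by
    have hc : (2 : ℚ) ≤ c := by exact_mod_cast (by simpa using hl : 2 ≤ c)
    simp only [cfVal, add_zero, one_div]
    exact ⟨by positivity, inv_lt_one_of_one_lt₀ (by linarith)⟩
  | c :: e :: t, h, hl => by
    obtain ⟨hv0, -⟩ := cfVal_mem_Ioo (e :: t) (fun x hx => h x (mem_cons_of_mem c hx))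
      (by simpa [getLastD_cons] using hl)
    have hc : (1 : ℚ) ≤ c := by exact_mod_cast h c mem_cons_self
    rw [cfVal, one_div]
    exact ⟨by positivity, inv_lt_one_of_one_lt₀ (by linarith)⟩

theorem one_lt_rrTail_append {l s : List ℕ} (hl : ∀ x ∈ l, 2 ≤ x) (hs : 1 < rrTail s) :
    1 < rrTail (l ++ s) := by
  induction l with
  | nil => exact hs
  | cons c l ih =>
    have hc : (2 : ℚ) ≤ c := by exact_mod_cast hl c mem_cons_self
    have ih := ih fun x hx => hl x (mem_cons_of_mem c hx)
    have : 1 / rrTail (l ++ s) < 1 := (div_lt_one (by linarith)).2 ih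
    rw [cons_append, rrTail]
    linarith

theorem one_lt_rrTail {b : List ℕ} (hb : ∀ x ∈ b, 2 ≤ x) (hne : b ≠ []) : 1 < rrTail b := by
  rw [← dropLast_append_getLast hne]
  have hlast : (2 : ℚ) ≤ b.getLast hne := by exact_mod_cast hb _ (getLast_mem hne)
  refine one_lt_rrTail_append (fun x hx => hb x (mem_of_mem_dropLast hx)) ?_
  simp only [rrTail, div_zero, sub_zero]
  linarith

theorem inv_rrTail_mem_Ico {t : List ℕ} (ht : ∀ x ∈ t, 2 ≤ x) : (rrTail t)⁻¹ ∈ Set.Ico 0 1 := by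
  rcases eq_or_ne t [] with rfl | hne
  · simp [rrTail]
  · have := one_lt_rrTail ht hne
    exact ⟨by positivity, inv_lt_one_of_one_lt₀ this⟩

theorem ceil_rrTail_cons (c : ℕ) {t : List ℕ} (ht : ∀ x ∈ t, 2 ≤ x) :
    ⌈rrTail (c :: t)⌉ = c := by
  obtain ⟨h0, h1⟩ := inv_rrTail_mem_Ico ht
  rw [Int.ceil_eq_iff, rrTail, one_div]
  push_cast
  constructor <;> linarith

theorem rrTail_injOn : Set.InjOn rrTail {b | ∀ x ∈ b, 2 ≤ x} := by
  intro b hb b' hb' h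
  induction b generalizing b' with
  | nil =>
    cases b' with
    | nil => rfl
    | cons c' t' =>
      have := one_lt_rrTail hb' (cons_ne_nil c' t')
      rw [← h, rrTail] at this
      norm_num at this
  | cons c t ih =>
    cases b' with
    | nil =>
      have := one_lt_rrTail hb (cons_ne_nil c t)
      rw [h, rrTail] at this
      norm_num at this
    | cons c' t' =>
      have ht : ∀ x ∈ t, 2 ≤ x := fun x hx => hb x (mem_cons_of_mem c hx)
      have ht' : ∀ x ∈ t', 2 ≤ x := fun x hx => hb' x (mem_cons_of_mem c' hx)
      have hc : c = c' := by
        exact_mod_cast (ceil_rrTail_cons c ht).symm.trans (h ▸ ceil_rrTail_cons c' ht')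
      subst hc
      simp only [rrTail, one_div, sub_right_inj, inv_inj] at h
      rw [ih ht ht' h]

theorem rrcfVal_injOn : Set.InjOn rrcfVal {b | ∀ x ∈ b, 2 ≤ x} := by
  intro b hb b' hb' h
  simp only [rrcfVal, one_div, sub_right_inj, inv_inj] at h
  exact rrTail_injOn hb hb' h

theorem IsRRCF.unique {x : ℚ} {b b' : List ℕ} (hb : IsRRCF x b) (hb' : IsRRCF x b') : b = b' :=
  rrcfVal_injOn hb.1 hb'.1 (hb.2.symm.trans hb'.2)

theorem inv_two_sub_inv_sub_one {K : Type*} [Field K] {y : K} (h0 : y ≠ 0) (h1 : y - 1 ≠ 0) :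
    (2 - y⁻¹ - 1)⁻¹ = (y - 1)⁻¹ + 1 := by
  rw [show 2 - y⁻¹ - 1 = (y - 1) / y by field_simp; ring, inv_div]
  field_simp
  ring

theorem inv_rrTail_replicate_two_append_sub_one {s : List ℕ} (hs : 1 < rrTail s) (n : ℕ) :
    (rrTail (replicate n 2 ++ s) - 1)⁻¹ = n + (rrTail s - 1)⁻¹ := by
  induction n with
  | zero => simp
  | succ n ih =>
    have hy := one_lt_rrTail_append (l := replicate n 2) (fun x hx => (eq_of_mem_replicate hx).ge) hs
    rw [replicate_succ, cons_append, rrTail, one_div, Nat.cast_ofNat,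
      inv_two_sub_inv_sub_one (by linarith) (by linarith), ih]
    push_cast
    ring

theorem one_sub_inv_eq_of_inv_sub_one_eq {K : Type*} [Field K] {x y : K} (hx0 : x ≠ 0)
    (hx1 : x ≠ 1) (h : (y - 1)⁻¹ = x⁻¹ - 1) : 1 - y⁻¹ = x := by
  have hy : y = 1 + (x⁻¹ - 1)⁻¹ := by rw [← h, inv_inv]; ring
  have : 1 - x ≠ 0 := sub_ne_zero.2 hx1.symm
  subst hy
  field_simp
  ring

theorem inv_rrTail_cfToRRCF_sub_one :
    ∀ a : List ℕ, (∀ x ∈ a, 1 ≤ x) → 2 ≤ a.getLastD 0 →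
      (rrTail (cfToRRCF a) - 1)⁻¹ = (cfVal a)⁻¹ - 1
  | [], _, hl => by simp at hl
  | [c], _, hl => by
    obtain ⟨n, rfl⟩ : ∃ n, c = n + 2 := ⟨c - 2, by simp at hl; omega⟩
    rw [cfToRRCF, show n + 2 - 1 = n + 1 from rfl, replicate_succ',
      inv_rrTail_replicate_two_append_sub_one (by norm_num [rrTail])]
    norm_num [rrTail, cfVal]
    ring
  | [c, d], h, hl => by
    obtain ⟨m, rfl⟩ : ∃ m, c = m + 1 := ⟨c - 1, by have := h c (by simp); omega⟩
    have hd : (2 : ℚ) ≤ d := by exact_mod_cast (by simpa using hl : 2 ≤ d)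
    rw [cfToRRCF, Nat.add_sub_cancel, inv_rrTail_replicate_two_append_sub_one
      (by simp only [rrTail]; push_cast; linarith)]
    simp [rrTail, cfVal]
    ring
  | c :: d :: e :: t, h, hl => by
    obtain ⟨m, rfl⟩ : ∃ m, c = m + 1 := ⟨c - 1, by have := h c (by simp); omega⟩
    have ht : ∀ x ∈ e :: t, 1 ≤ x := fun x hx => h x (by simp [hx])
    have htl : 2 ≤ (e :: t).getLastD 0 := by simpa [getLastD_cons] using hl
    obtain ⟨hv0, hv1⟩ := cfVal_mem_Ioo (e :: t) ht htl
    have hR := one_sub_inv_eq_of_inv_sub_one_eq hv0.ne' hv1.ne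
      (inv_rrTail_cfToRRCF_sub_one (e :: t) ht htl)
    have hS : rrTail ((d + 2) :: cfToRRCF (e :: t)) = d + 1 + cfVal (e :: t) := by
      rw [rrTail, one_div, ← hR]
      push_cast
      ring
    rw [cfToRRCF.eq_4 _ _ _ (cons_ne_nil e t), Nat.add_sub_cancel,
      inv_rrTail_replicate_two_append_sub_one (by rw [hS]; linarith), hS]
    simp only [cfVal, one_div, inv_inv]
    push_cast
    ring

theorem rrcfVal_cfToRRCF {a : List ℕ} (h1 : ∀ x ∈ a, 1 ≤ x) (h2 : 2 ≤ a.getLastD 0) :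
    rrcfVal (cfToRRCF a) = cfVal a := by
  obtain ⟨hx0, hx1⟩ := cfVal_mem_Ioo a h1 h2
  rw [rrcfVal, one_div]
  exact one_sub_inv_eq_of_inv_sub_one_eq hx0.ne' hx1.ne (inv_rrTail_cfToRRCF_sub_one a h1 h2)

theorem two_le_of_mem_cfToRRCF : ∀ {a : List ℕ}, (∀ x ∈ a, 1 ≤ x) → ∀ y ∈ cfToRRCF a, 2 ≤ y
  | [], _, y, hy => by simp [cfToRRCF] at hy
  | [c], _, y, hy => (eq_of_mem_replicate hy).ge
  | [c, d], h, y, hy => by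
    have := h d (by simp)
    simp only [cfToRRCF, mem_append, List.mem_singleton] at hy
    rcases hy with hy | rfl
    · exact (eq_of_mem_replicate hy).ge
    · omega
  | c :: d :: e :: t, h, y, hy => by
    simp only [cfToRRCF, mem_append, mem_cons] at hy
    rcases hy with hy | rfl | hy
    · exact (eq_of_mem_replicate hy).ge
    · omega
    · exact two_le_of_mem_cfToRRCF (fun x hx => h x (by simp [hx])) y hy

theorem IsCF.isRRCF_cfToRRCF {x : ℚ} {a : List ℕ} (ha : IsCF x a) : IsRRCF x (cfToRRCF a) :=
  ⟨two_le_of_mem_cfToRRCF ha.1, ha.2.2.trans (rrcfVal_cfToRRCF ha.1 ha.2.1).symm⟩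

theorem rrcf_eq_cfToRRCF_general
    (x : ℚ)
    (a : List ℕ) (ha : IsCF x a)
    (b : List ℕ) (hb : IsRRCF x b) :
    b = cfToRRCF a :=
  hb.unique ha.isRRCF_cfToRRCF

/-- the regular reduced continued fraction expansion of `x` is
obtained from its regular continued fraction expansion by the rules above. -/
theorem rrcf_eq_cfToRRCF
    (x : ℚ) (hx : x ∈ Set.Ioo (0 : ℚ) 1)
    (a : List ℕ) (ha : IsCF x a)
    (b : List ℕ) (hb : IsRRCF x b) :
    b = cfToRRCF a :=
  rrcf_eq_cfToRRCF_general x a ha b hb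
end
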